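/- arXiv:2001.10928 — 5 statements merged into one kernel-verified Lean document; each statement's English description precedes it below -/
import Mathlib

section
/- The Schur complement S = L₂₂ − L₂₁ L₁₁⁻¹ L₁₂ of a graph Laplacian L with respect to its first diagonal block is itself a graph Laplacian: S is symmetric, has nonpositive off-diagonal entries, and satisfies S·𝟏ₘ = 0. -/
/-!
A Laplacian is positive semidefinite, since `2 xᵀ L x = ∑ᵢⱼ (-Lᵢⱼ) (xᵢ - xⱼ)²`, so its principal
block `L₁₁` is a positive semidefinite matrix with nonpositive off-diagonal entries. If such a
matrix is invertible it is inverse-positive: when `L₁₁ x ≥ 0`, pairing with the negative part `x⁻`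
gives `x⁻ᵀ L₁₁ x⁻ ≤ 0`, hence `L₁₁ x⁻ = 0` and `x⁻ = 0`. Thus `L₂₁ L₁₁⁻¹ L₁₂ ≥ 0` entrywise, so the
off-diagonal entries of `S` stay nonpositive. Symmetry is inherited from `L`, and eliminating the
first block from `L (𝟏, 𝟏) = 0` gives `S 𝟏 = 0`.
-/

open Matrix

namespace Matrix

variable {ι κ : Type*} [Fintype ι]

structure IsLaplacian (L : Matrix ι ι ℝ) : Prop where
  isSymm : L.IsSymm
  apply_nonpos_of_ne : ∀ i j, i ≠ j → L i j ≤ 0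
  mulVec_one : L *ᵥ 1 = 0

namespace IsLaplacian

variable {L : Matrix ι ι ℝ}

theorem sum_apply_eq_zero (hL : L.IsLaplacian) (i : ι) : ∑ j, L i j = 0 := by
  simpa [mulVec, dotProduct] using congrFun hL.mulVec_one i

theorem two_mul_dotProduct_mulVec_eq (hL : L.IsLaplacian) (x : ι → ℝ) :
    2 * (x ⬝ᵥ L *ᵥ x) = ∑ i, ∑ j, -L i j * (x i - x j) ^ 2 := by
  have hrow : ∑ i, ∑ j, L i j * x i ^ 2 = 0 := by
    simp [← Finset.sum_mul, hL.sum_apply_eq_zero]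
  have hcol : ∑ i, ∑ j, L i j * x j ^ 2 = 0 := by
    rw [Finset.sum_comm]
    simp [← Finset.sum_mul, ← hL.isSymm.apply, hL.sum_apply_eq_zero]
  calc 2 * (x ⬝ᵥ L *ᵥ x)
      = ∑ i, ∑ j, (2 * (x i * (L i j * x j)) - L i j * x i ^ 2 - L i j * x j ^ 2) := by
        simp only [Finset.sum_sub_distrib, hrow, hcol, dotProduct, mulVec, Finset.mul_sum]
        ring
    _ = ∑ i, ∑ j, -L i j * (x i - x j) ^ 2 := by
        congr! 2; ring

theorem posSemidef (hL : L.IsLaplacian) : L.PosSemidef := by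
  refine .of_dotProduct_mulVec_nonneg hL.isSymm fun x => ?_
  have hsum : 0 ≤ ∑ i, ∑ j, -L i j * (x i - x j) ^ 2 := by
    refine Finset.sum_nonneg fun i _ => Finset.sum_nonneg fun j _ => ?_
    rcases eq_or_ne i j with rfl | hij
    · simp
    · exact mul_nonneg (neg_nonneg.2 (hL.apply_nonpos_of_ne i j hij)) (sq_nonneg _)
  rw [star_trivial]
  linarith [hL.two_mul_dotProduct_mulVec_eq x]

end IsLaplacian

theorem dotProduct_mulVec_nonpos_of_mul_eq_zero {A : Matrix ι ι ℝ}
    (hA : ∀ i j, i ≠ j → A i j ≤ 0) {p q : ι → ℝ} (hp : 0 ≤ p) (hq : 0 ≤ q)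
    (hpq : ∀ i, q i * p i = 0) : q ⬝ᵥ A *ᵥ p ≤ 0 := by
  simp only [dotProduct, mulVec, Finset.mul_sum]
  refine Finset.sum_nonpos fun i _ => Finset.sum_nonpos fun j _ => ?_
  rcases eq_or_ne i j with rfl | hij
  · simp [mul_left_comm, hpq]
  · rw [mul_left_comm]
    exact mul_nonpos_of_nonpos_of_nonneg (hA i j hij) (mul_nonneg (hq i) (hp j))

theorem nonneg_of_mulVec_nonneg {A : Matrix ι ι ℝ} (hpsd : A.PosSemidef)
    (hinj : Function.Injective A.mulVec) (hA : ∀ i j, i ≠ j → A i j ≤ 0)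
    {x : ι → ℝ} (hx : 0 ≤ A *ᵥ x) : 0 ≤ x := by
  have hdisj : ∀ i, x⁻ i * x⁺ i = 0 := fun i => by
    rcases le_total (x i) 0 with h | h
    · simp [posPart_eq_zero.2 h]
    · simp [negPart_eq_zero.2 h]
  have hle : x⁻ ⬝ᵥ A *ᵥ x⁻ ≤ 0 :=
    calc x⁻ ⬝ᵥ A *ᵥ x⁻ = x⁻ ⬝ᵥ A *ᵥ x⁺ - x⁻ ⬝ᵥ A *ᵥ (x⁺ - x⁻) := by
          rw [mulVec_sub, dotProduct_sub, sub_sub_cancel]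
      _ = x⁻ ⬝ᵥ A *ᵥ x⁺ - x⁻ ⬝ᵥ A *ᵥ x := by rw [posPart_sub_negPart]
      _ ≤ 0 := sub_nonpos_of_le <|
          (dotProduct_mulVec_nonpos_of_mul_eq_zero hA (posPart_nonneg x) (negPart_nonneg x)
            hdisj).trans (dotProduct_nonneg_of_nonneg (negPart_nonneg x) hx)
  have hker : A *ᵥ x⁻ = 0 := (hpsd.dotProduct_mulVec_zero_iff _).1 <|
    le_antisymm (by simpa using hle) (hpsd.dotProduct_mulVec_nonneg _)
  have hneg : x⁻ = 0 := hinj (by rw [hker, mulVec_zero])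
  rw [← posPart_sub_negPart x, hneg, sub_zero]
  exact posPart_nonneg x

theorem inv_apply_nonneg [DecidableEq ι] {A : Matrix ι ι ℝ} (hpsd : A.PosSemidef)
    (hdet : IsUnit A.det) (hA : ∀ i j, i ≠ j → A i j ≤ 0) (i j : ι) : 0 ≤ A⁻¹ i j := by
  have hcol : 0 ≤ A⁻¹ *ᵥ Pi.single j 1 :=
    nonneg_of_mulVec_nonneg hpsd
      (mulVec_injective_iff_isUnit.2 ((isUnit_iff_isUnit_det A).2 hdet)) hA
      (by rw [mulVec_mulVec, mul_nonsing_inv A hdet, one_mulVec]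
          exact Pi.single_nonneg.2 zero_le_one)
  simpa using hcol i

section SchurComplement

variable [DecidableEq ι] {A : Matrix ι ι ℝ} {B : Matrix ι κ ℝ} {C : Matrix κ ι ℝ}
  {D : Matrix κ κ ℝ}

theorem IsSymm.schur_complement (h : (Matrix.fromBlocks A B C D).IsSymm) :
    (D - C * A⁻¹ * B).IsSymm := by
  obtain ⟨hA, hBC, hCB, hD⟩ := isSymm_fromBlocks_iff.1 h
  rw [IsSymm, transpose_sub, transpose_mul, transpose_mul, transpose_nonsing_inv, hA.eq, hBC,
    hCB, hD.eq, Matrix.mul_assoc]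

variable [Fintype κ]

theorem schur_complement_mulVec_eq_zero (hA : IsUnit A.det) {u : ι → ℝ} {v : κ → ℝ}
    (h : fromBlocks A B C D *ᵥ Sum.elim u v = 0) : (D - C * A⁻¹ * B) *ᵥ v = 0 := by
  rw [fromBlocks_mulVec] at h
  have h₁ : A *ᵥ u + B *ᵥ v = 0 := funext fun i => by simpa using congrFun h (.inl i)
  have h₂ : C *ᵥ u + D *ᵥ v = 0 := funext fun i => by simpa using congrFun h (.inr i)
  have hu : (A⁻¹ * B) *ᵥ v = -u := by
    rw [← mulVec_mulVec, eq_neg_of_add_eq_zero_right h₁, mulVec_neg, mulVec_mulVec,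
      nonsing_inv_mul A hA, one_mulVec]
  rw [sub_mulVec, Matrix.mul_assoc, ← mulVec_mulVec, hu, mulVec_neg, sub_neg_eq_add, add_comm,
    h₂]

theorem IsLaplacian.schur_complement (hL : (fromBlocks A B C D).IsLaplacian)
    (hA : IsUnit A.det) : (D - C * A⁻¹ * B).IsLaplacian where
  isSymm := hL.isSymm.schur_complement
  apply_nonpos_of_ne i j hij := by
    have hAinv : ∀ k l, 0 ≤ A⁻¹ k l :=
      inv_apply_nonneg (hL.posSemidef.submatrix Sum.inl) hA fun k l hkl =>
        hL.apply_nonpos_of_ne (.inl k) (.inl l) (by simpa using hkl)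
    have hC : ∀ k, C i k ≤ 0 := fun k => hL.apply_nonpos_of_ne (.inr i) (.inl k) (by simp)
    have hB : ∀ l, B l j ≤ 0 := fun l => hL.apply_nonpos_of_ne (.inl l) (.inr j) (by simp)
    have hCAB : 0 ≤ (C * A⁻¹ * B) i j := by
      simp only [mul_apply, Finset.sum_mul]
      exact Finset.sum_nonneg fun l _ => Finset.sum_nonneg fun k _ =>
        mul_nonneg_of_nonpos_of_nonpos (mul_nonpos_of_nonpos_of_nonneg (hC k) (hAinv k l)) (hB l)
    have hD : D i j ≤ 0 := hL.apply_nonpos_of_ne (.inr i) (.inr j) (by simpa using hij)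
    rw [sub_apply]
    linarith
  mulVec_one := schur_complement_mulVec_eq_zero hA (by rw [Sum.elim_one_one]; exact hL.mulVec_one)

end SchurComplement

end Matrix

theorem schur_complement_is_graph_laplacian_general
    (n m : ℕ)
    (L11 : Matrix (Fin (n - m)) (Fin (n - m)) ℝ)
    (L12 : Matrix (Fin (n - m)) (Fin m) ℝ)
    (L21 : Matrix (Fin m) (Fin (n - m)) ℝ)
    (L22 : Matrix (Fin m) (Fin m) ℝ)
    (L : Matrix (Fin (n - m) ⊕ Fin m) (Fin (n - m) ⊕ Fin m) ℝ)
    (hL : L = Matrix.fromBlocks L11 L12 L21 L22)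
    (hsym : L.IsSymm)
    (hoff : ∀ i j, i ≠ j → L i j ≤ 0)
    (hone : L *ᵥ (fun _ => (1 : ℝ)) = 0)
    (hinv : IsUnit L11.det)
    (S : Matrix (Fin m) (Fin m) ℝ)
    (hS : S = L22 - L21 * L11⁻¹ * L12) :
    S.IsSymm ∧ (∀ i j, i ≠ j → S i j ≤ 0) ∧ S *ᵥ (fun _ => (1 : ℝ)) = 0 := by
  subst hL hS
  have hS := IsLaplacian.schur_complement ⟨hsym, hoff, hone⟩ hinv
  exact ⟨hS.isSymm, hS.apply_nonpos_of_ne, hS.mulVec_one⟩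

/-- The Schur complement `S = L₂₂ − L₂₁ L₁₁⁻¹ L₁₂` of a graph Laplacian `L`
with respect to its first diagonal block is itself a graph Laplacian: `S` is symmetric,
has nonpositive off-diagonal entries, and satisfies `S · 𝟏ₘ = 0`. -/
theorem schur_complement_is_graph_laplacian
    (n m : ℕ) (hm : 0 < m) (hmn : m < n)
    (L11 : Matrix (Fin (n - m)) (Fin (n - m)) ℝ)
    (L12 : Matrix (Fin (n - m)) (Fin m) ℝ)
    (L21 : Matrix (Fin m) (Fin (n - m)) ℝ)
    (L22 : Matrix (Fin m) (Fin m) ℝ)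
    (L : Matrix (Fin (n - m) ⊕ Fin m) (Fin (n - m) ⊕ Fin m) ℝ)
    (hL : L = Matrix.fromBlocks L11 L12 L21 L22)
    (hsym : L.IsSymm)
    (hoff : ∀ i j, i ≠ j → L i j ≤ 0)
    (hone : L *ᵥ (fun _ => (1 : ℝ)) = 0)
    (hinv : IsUnit L11.det)
    (S : Matrix (Fin m) (Fin m) ℝ)
    (hS : S = L22 - L21 * L11⁻¹ * L12) :
    S.IsSymm ∧ (∀ i j, i ≠ j → S i j ≤ 0) ∧ S *ᵥ (fun _ => (1 : ℝ)) = 0 :=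
  schur_complement_is_graph_laplacian_general n m L11 L12 L21 L22 L hL hsym hoff hone hinv S hS
end

section
/- (Boundedness of the discrete trace operator.) For every u : (ℤ/kℤ) × {1,…,ℓ} → ℝ, the boundary restriction φ(i) = u(i,1) satisfies |φ|_Γ² ≤ max{3c, 4π²} · |u|_G². -/
/-!
Write `D v = ∑ p, (φ (p + v) - φ p) ^ 2`. Grouping the pairs in `|φ|_Γ²` by their difference gives
`|φ|_Γ² ≤ ∑_{1 ≤ v ≤ k/2} D v / v²`. A boundary difference across a shift `v` is routed through
row `j` (down a column, `v` steps along row `j`, back up), so `D v ≤ 3 v² H_j + 6 W_j`, where `H_j`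
is the horizontal energy of row `j` and `W_j` its squared distance from row `1`. For `v ≤ ℓ` take
`j = v`: the terms `W_v / v²` add up to at most `4 V` by the discrete Hardy inequality, `V` being
the vertical energy. For `v > ℓ` average over `j ≤ ℓ` and use `W_j ≤ ℓ V` and
`∑_{v > ℓ} 1 / v² ≤ 2 / (ℓ + 1)`. Altogether `|φ|_Γ² ≤ 3 (max ℓ (k/2) / ℓ) H + 36 V`, and
`max ℓ (k/2) ≤ c ℓ`, `36 < 4π²`.
-/

open Real Finset

noncomputable section

/-- The cycle distance on `ℤ/kℤ`: `d(p,q) = min{(p−q) mod k, (q−p) mod k}`. -/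
def cycDist (k : ℕ) (p q : ZMod k) : ℕ := min (p - q).val (q - p).val

/-- The boundary seminorm squared:
`|φ|_Γ² = Σ_{{p,q} : p ≠ q} (φ(p) − φ(q))² / d(p,q)²`, the sum being over unordered
pairs of distinct elements of `ℤ/kℤ`. -/
def bSemiSq (k : ℕ) [NeZero k] (φ : ZMod k → ℝ) : ℝ :=
  (1 / 2) * ∑ p : ZMod k, ∑ q : ZMod k,
    if p ≠ q then (φ p - φ q) ^ 2 / (cycDist k p q : ℝ) ^ 2 else 0

/-- The energy seminorm squared on `G_{k,ℓ} = C_k □ P_ℓ` (vertices `(i,j)`,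
`i ∈ ℤ/kℤ`, `j ∈ {1,…,ℓ}`):
`|u|_G² = Σ_i Σ_{j=1}^{ℓ} (u(i+1,j) − u(i,j))² + Σ_i Σ_{j=1}^{ℓ−1} (u(i,j+1) − u(i,j))²`. -/
def energySq (k ℓ : ℕ) [NeZero k] (u : ZMod k → ℕ → ℝ) : ℝ :=
  (∑ i : ZMod k, ∑ j ∈ Finset.Icc 1 ℓ, (u (i + 1) j - u i j) ^ 2)
  + ∑ i : ZMod k, ∑ j ∈ Finset.Icc 1 (ℓ - 1), (u i (j + 1) - u i j) ^ 2

section ShiftEnergy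

variable {G : Type*} [AddCommGroup G] [Fintype G]

def shiftEnergy (f : G → ℝ) (s : G) : ℝ := ∑ p, (f (p + s) - f p) ^ 2

lemma shiftEnergy_nonneg (f : G → ℝ) (s : G) : 0 ≤ shiftEnergy f s :=
  sum_nonneg fun _ _ => sq_nonneg _

@[simp]
lemma shiftEnergy_zero (f : G → ℝ) : shiftEnergy f 0 = 0 := by
  simp [shiftEnergy]

lemma shiftEnergy_neg (f : G → ℝ) (s : G) : shiftEnergy f (-s) = shiftEnergy f s := by
  rw [shiftEnergy, ← Equiv.sum_comp (Equiv.addRight s)]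
  simp [shiftEnergy, sub_sq_comm]

lemma shiftEnergy_nsmul_le (f : G → ℝ) (s : G) (n : ℕ) :
    shiftEnergy f (n • s) ≤ n ^ 2 * shiftEnergy f s := by
  have htelescope : ∀ p, f (p + n • s) - f p =
      ∑ i ∈ range n, (f (p + i • s + s) - f (p + i • s)) := fun p => by
    simpa [succ_nsmul, add_assoc] using (sum_range_sub (fun i => f (p + i • s)) n).symm
  calc shiftEnergy f (n • s)
      ≤ ∑ p, n * ∑ i ∈ range n, (f (p + i • s + s) - f (p + i • s)) ^ 2 := by
        refine sum_le_sum fun p _ => ?_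
        simpa [htelescope] using sq_sum_le_card_mul_sum_sq (s := range n)
          (f := fun i => f (p + i • s + s) - f (p + i • s))
    _ = n * ∑ i ∈ range n, shiftEnergy f s := by
        rw [← mul_sum, sum_comm]
        congr 1
        exact sum_congr rfl fun i _ =>
          Equiv.sum_comp (Equiv.addRight (i • s)) fun q => (f (q + s) - f q) ^ 2
    _ = n ^ 2 * shiftEnergy f s := by
        rw [sum_const, card_range, nsmul_eq_mul]
        ring

/-- Route `f (p + s) - f p` through `g`: it is the sum of `f (p + s) - g (p + s)`,
`g (p + s) - g p` and `g p - f p`, and by translation invariance the two outer terms have the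
same sum of squares. -/
lemma shiftEnergy_le_three_mul_add (f g : G → ℝ) (s : G) :
    shiftEnergy f s ≤ 3 * shiftEnergy g s + 6 * ∑ p, (g p - f p) ^ 2 := by
  have hpoint : ∀ p, (f (p + s) - f p) ^ 2 ≤
      3 * (g (p + s) - g p) ^ 2 + 3 * (g p - f p) ^ 2 + 3 * (g (p + s) - f (p + s)) ^ 2 :=
    fun p => by
      nlinarith [sq_nonneg (g (p + s) - g p - (g p - f p)),
        sq_nonneg (g p - f p - (g (p + s) - f (p + s))),
        sq_nonneg (g (p + s) - g p + (g (p + s) - f (p + s)))]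
  have htranslate : ∑ p, (g (p + s) - f (p + s)) ^ 2 = ∑ p, (g p - f p) ^ 2 :=
    Equiv.sum_comp (Equiv.addRight s) fun q => (g q - f q) ^ 2
  calc shiftEnergy f s
      ≤ ∑ p, (3 * (g (p + s) - g p) ^ 2 + 3 * (g p - f p) ^ 2
          + 3 * (g (p + s) - f (p + s)) ^ 2) := sum_le_sum fun p _ => hpoint p
    _ = 3 * shiftEnergy g s + 6 * ∑ p, (g p - f p) ^ 2 := by
        simp only [sum_add_distrib, ← mul_sum, htranslate, shiftEnergy]
        ring

end ShiftEnergy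

section CycDist

variable {k : ℕ}

lemma cycDist_self_add (p s : ZMod k) : cycDist k p (p + s) = cycDist k 0 s := by
  simp [cycDist]

lemma cycDist_zero_neg (s : ZMod k) : cycDist k 0 (-s) = cycDist k 0 s := by
  simp [cycDist, min_comm]

variable [NeZero k]

lemma cycDist_zero_natCast {v : ℕ} (hv : v ≤ k / 2) : cycDist k 0 v = v := by
  have hk : 0 < k := Nat.pos_of_ne_zero (NeZero.ne k)
  have hvk : v < k := by omega
  rcases Nat.eq_zero_or_pos v with rfl | hv0
  · simp [cycDist]
  · have hv' : (v : ZMod k) ≠ 0 := by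
      rw [Ne, ← ZMod.val_eq_zero, ZMod.val_natCast_of_lt hvk]
      omega
    simp only [cycDist, zero_sub, sub_zero, ZMod.neg_val, if_neg hv', ZMod.val_natCast_of_lt hvk]
    omega

lemma cycDist_zero_mem_Icc {s : ZMod k} (hs : s ≠ 0) : cycDist k 0 s ∈ Icc 1 (k / 2) := by
  have hneg := ZMod.neg_val s
  have hpos : s.val ≠ 0 := (ZMod.val_ne_zero s).2 hs
  have hlt := ZMod.val_lt s
  rw [if_neg hs] at hneg
  simp only [cycDist, zero_sub, sub_zero, mem_Icc, hneg]
  omega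

lemma eq_or_eq_neg_of_cycDist_zero_eq {s : ZMod k} {v : ℕ} (h : cycDist k 0 s = v) :
    s = v ∨ s = -v := by
  simp only [cycDist, zero_sub, sub_zero] at h
  rcases min_choice (-s).val s.val with hmin | hmin <;> rw [hmin] at h
  · right
    rw [← neg_neg s, ← ZMod.natCast_zmod_val (-s), h]
  · left
    rw [← ZMod.natCast_zmod_val s, h]

end CycDist

namespace ZMod

/-- Group the elements of `ZMod k` by their distance `v ≤ k / 2` to `0`: each fibre is `{v, -v}`. -/
lemma sum_le_add_sum_Icc_half {k : ℕ} [NeZero k] (F : ZMod k → ℝ) (hF : ∀ s, 0 ≤ F s) :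
    ∑ s, F s ≤ F 0 + ∑ v ∈ Icc 1 (k / 2), (F v + F (-v)) := by
  rw [← add_sum_erase _ _ (mem_univ 0), ← sum_fiberwise_of_maps_to (g := cycDist k 0)
    fun s hs => cycDist_zero_mem_Icc (ne_of_mem_erase hs)]
  gcongr with v
  calc ∑ s ∈ univ.erase 0 with cycDist k 0 s = v, F s
      ≤ ∑ s ∈ {(v : ZMod k), -(v : ZMod k)}, F s := by
        refine sum_le_sum_of_subset_of_nonneg (fun s hs => ?_) fun s _ _ => hF s
        simpa using eq_or_eq_neg_of_cycDist_zero_eq (mem_filter.1 hs).2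
    _ ≤ F v + F (-v) := by
        by_cases hv : (v : ZMod k) = -v
        · rw [insert_eq_of_mem (mem_singleton.2 hv), sum_singleton]
          linarith [hF (v : ZMod k)]
        · rw [sum_pair hv]

end ZMod

section Boundary

variable {k : ℕ} [NeZero k]

lemma bSemiSq_eq_sum_shiftEnergy (φ : ZMod k → ℝ) :
    bSemiSq k φ = (1 / 2) * ∑ s, shiftEnergy φ s / (cycDist k 0 s : ℝ) ^ 2 := by
  rw [bSemiSq]
  congr 1
  -- the diagonal terms vanish anyway, since `(φ p - φ p) ^ 2 = 0`
  have hdiag : ∀ p q : ZMod k, (if p ≠ q then (φ p - φ q) ^ 2 / (cycDist k p q : ℝ) ^ 2 else 0)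
      = (φ p - φ q) ^ 2 / (cycDist k p q : ℝ) ^ 2 := fun p q => by
    split_ifs with h
    · rfl
    · simp [not_not.1 h]
  simp_rw [hdiag]
  calc ∑ p, ∑ q, (φ p - φ q) ^ 2 / (cycDist k p q : ℝ) ^ 2
      = ∑ p, ∑ s, (φ (p + s) - φ p) ^ 2 / (cycDist k 0 s : ℝ) ^ 2 := by
        refine sum_congr rfl fun p _ => ?_
        rw [← Equiv.sum_comp (Equiv.addLeft p)]
        simp [cycDist_self_add, sub_sq_comm]
    _ = ∑ s, shiftEnergy φ s / (cycDist k 0 s : ℝ) ^ 2 := by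
        rw [sum_comm]
        simp [shiftEnergy, sum_div]

lemma bSemiSq_le_sum_Icc (φ : ZMod k → ℝ) :
    bSemiSq k φ ≤ ∑ v ∈ Icc 1 (k / 2), shiftEnergy φ v / (v : ℝ) ^ 2 := by
  set F : ZMod k → ℝ := fun s => shiftEnergy φ s / (cycDist k 0 s : ℝ) ^ 2
  have hfold := ZMod.sum_le_add_sum_Icc_half F fun s => by
    have := shiftEnergy_nonneg φ s
    positivity
  have hpair : ∀ v ∈ Icc 1 (k / 2), F v + F (-v) = 2 * (shiftEnergy φ v / (v : ℝ) ^ 2) :=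
    fun v hv => by
      simp only [F, shiftEnergy_neg, cycDist_zero_neg, cycDist_zero_natCast (mem_Icc.1 hv).2]
      ring
  rw [sum_congr rfl hpair, ← mul_sum] at hfold
  rw [bSemiSq_eq_sum_shiftEnergy]
  simp only [F, shiftEnergy_zero, zero_div, zero_add] at hfold
  linarith

end Boundary

lemma sq_sub_le_mul_sum_sq (b : ℕ → ℝ) {i j : ℕ} (hij : i ≤ j) :
    (b j - b i) ^ 2 ≤ ((j - i : ℕ) : ℝ) * ∑ m ∈ Ico i j, (b (m + 1) - b m) ^ 2 := by
  rw [← sum_Ico_sub b hij, ← Nat.card_Ico]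
  exact sq_sum_le_card_mul_sum_sq

/-- Hardy's inequality. With `x v = (b v - b 1) / v` the increment `a = b (v + 1) - b v` equals
`(v + 1) x (v + 1) - v x v`, and then `x (v + 1) ^ 2 ≤ 4 a ^ 2 + 2 v x v ^ 2 - 2 (v + 1) x (v + 1) ^ 2`,
which telescopes. -/
theorem sum_sq_sub_div_le_four_mul (b : ℕ → ℝ) (N : ℕ) :
    ∑ v ∈ Icc 1 N, ((b v - b 1) / v) ^ 2 ≤ 4 * ∑ m ∈ Ico 1 N, (b (m + 1) - b m) ^ 2 := by
  set x : ℕ → ℝ := fun v => (b v - b 1) / v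
  have hstep : ∀ v x₀ x₁ : ℝ, 0 ≤ v →
      x₁ ^ 2 ≤ 4 * ((v + 1) * x₁ - v * x₀) ^ 2 + 2 * v * x₀ ^ 2 - 2 * (v + 1) * x₁ ^ 2 :=
    fun v x₀ x₁ hv => by
      nlinarith [mul_nonneg hv (sq_nonneg (x₀ - x₁)), sq_nonneg (2 * ((v + 1) * x₁ - v * x₀) - x₁)]
  have hstrong : ∀ N ≥ 1, ∑ v ∈ Icc 1 N, x v ^ 2 + 2 * N * x N ^ 2
      ≤ 4 * ∑ m ∈ Ico 1 N, (b (m + 1) - b m) ^ 2 := by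
    intro N hN
    induction N, hN using Nat.le_induction with
    | base => simp [x]
    | succ N hN ih =>
      have hinc : b (N + 1) - b N = (N + 1) * x (N + 1) - N * x N := by
        have : (N : ℝ) ≠ 0 := by positivity
        simp only [x]
        push_cast
        field_simp
        ring
      rw [sum_Icc_succ_top (by omega), sum_Ico_succ_top hN, hinc]
      have := hstep N (x N) (x (N + 1)) (by positivity)
      push_cast
      linarith
  rcases Nat.eq_zero_or_pos N with rfl | hN
  · simp
  · have := hstrong N hN
    have : 0 ≤ 2 * (N : ℝ) * x N ^ 2 := by positivity
    linarith

section Cylinder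

variable {k : ℕ} [NeZero k] (u : ZMod k → ℕ → ℝ) (ℓ : ℕ)

def horizontalEnergy : ℝ := ∑ j ∈ Icc 1 ℓ, shiftEnergy (fun p => u p j) 1

def verticalEnergy : ℝ := ∑ p, ∑ m ∈ Ico 1 ℓ, (u p (m + 1) - u p m) ^ 2

lemma horizontalEnergy_nonneg : 0 ≤ horizontalEnergy u ℓ :=
  sum_nonneg fun _ _ => shiftEnergy_nonneg _ _

lemma verticalEnergy_nonneg : 0 ≤ verticalEnergy u ℓ :=
  sum_nonneg fun _ _ => sum_nonneg fun _ _ => sq_nonneg _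

lemma energySq_eq_add : energySq k ℓ u = horizontalEnergy u ℓ + verticalEnergy u ℓ := by
  have hIco : Icc 1 (ℓ - 1) = Ico 1 ℓ := by
    ext
    simp only [mem_Icc, mem_Ico]
    omega
  rw [energySq, sum_comm, hIco]
  rfl

lemma shiftEnergy_row_one_le (v j : ℕ) :
    shiftEnergy (fun p => u p 1) v ≤
      3 * v ^ 2 * shiftEnergy (fun p => u p j) 1 + 6 * ∑ p, (u p j - u p 1) ^ 2 := by
  have hshift := shiftEnergy_nsmul_le (fun p => u p j) 1 v
  rw [nsmul_one] at hshift
  linarith [shiftEnergy_le_three_mul_add (fun p => u p 1) (fun p => u p j) (v : ZMod k)]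

lemma sum_sq_sub_row_one_le :
    ∑ j ∈ Icc 1 ℓ, ∑ p, (u p j - u p 1) ^ 2 ≤ ℓ ^ 2 * verticalEnergy u ℓ := by
  have hcol : ∀ j ∈ Icc 1 ℓ, ∑ p, (u p j - u p 1) ^ 2 ≤ ℓ * verticalEnergy u ℓ := by
    intro j hj
    obtain ⟨hj1, hjℓ⟩ := mem_Icc.1 hj
    rw [verticalEnergy, mul_sum]
    refine sum_le_sum fun p _ => (sq_sub_le_mul_sum_sq (u p) hj1).trans ?_
    refine mul_le_mul (by norm_cast; omega) ?_ (sum_nonneg fun _ _ => sq_nonneg _) (by positivity)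
    exact sum_le_sum_of_subset_of_nonneg (Ico_subset_Ico_right hjℓ) fun _ _ _ => sq_nonneg _
  calc ∑ j ∈ Icc 1 ℓ, ∑ p, (u p j - u p 1) ^ 2
      ≤ ∑ _j ∈ Icc 1 ℓ, ℓ * verticalEnergy u ℓ := sum_le_sum hcol
    _ = ℓ ^ 2 * verticalEnergy u ℓ := by
        rw [sum_const, Nat.card_Icc, Nat.add_sub_cancel, nsmul_eq_mul]
        ring

/-- Shifts `v ≤ ℓ` are compared through row `v`, where Hardy's inequality controls the
vertical detour. -/
lemma sum_Icc_shiftEnergy_div_sq_le :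
    ∑ v ∈ Icc 1 ℓ, shiftEnergy (fun p => u p 1) v / (v : ℝ) ^ 2 ≤
      3 * horizontalEnergy u ℓ + 24 * verticalEnergy u ℓ := by
  have hrow : ∀ v ∈ Icc 1 ℓ, shiftEnergy (fun p => u p 1) v / (v : ℝ) ^ 2 ≤
      3 * shiftEnergy (fun p => u p v) 1 + 6 * ∑ p, ((u p v - u p 1) / v) ^ 2 := by
    intro v hv
    have hv0 : (0 : ℝ) < v := by exact_mod_cast (mem_Icc.1 hv).1
    rw [div_le_iff₀ (by positivity)]
    simp only [div_pow, ← sum_div]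
    field_simp
    linarith [shiftEnergy_row_one_le u v v]
  have hhardy : ∑ v ∈ Icc 1 ℓ, ∑ p, ((u p v - u p 1) / v) ^ 2 ≤ 4 * verticalEnergy u ℓ := by
    rw [sum_comm, verticalEnergy, mul_sum]
    exact sum_le_sum fun p _ => sum_sq_sub_div_le_four_mul (u p) ℓ
  calc ∑ v ∈ Icc 1 ℓ, shiftEnergy (fun p => u p 1) v / (v : ℝ) ^ 2
      ≤ ∑ v ∈ Icc 1 ℓ, (3 * shiftEnergy (fun p => u p v) 1
          + 6 * ∑ p, ((u p v - u p 1) / v) ^ 2) := sum_le_sum hrow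
    _ ≤ 3 * horizontalEnergy u ℓ + 24 * verticalEnergy u ℓ := by
        rw [sum_add_distrib, ← mul_sum, ← mul_sum, horizontalEnergy]
        linarith

/-- Shifts `v > ℓ` are compared through every row `j ≤ ℓ` and averaged over `j`. -/
lemma sum_Ioc_shiftEnergy_div_sq_le (hℓ : 1 ≤ ℓ) (M : ℕ) :
    ∑ v ∈ Ioc ℓ M, shiftEnergy (fun p => u p 1) v / (v : ℝ) ^ 2 ≤
      3 * (((M - ℓ : ℕ) : ℝ) / ℓ) * horizontalEnergy u ℓ + 12 * verticalEnergy u ℓ := by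
  have hℓ0 : (0 : ℝ) < ℓ := by exact_mod_cast hℓ
  have havg : ∀ v : ℕ, ℓ * shiftEnergy (fun p => u p 1) v ≤
      3 * v ^ 2 * horizontalEnergy u ℓ + 6 * (ℓ ^ 2 * verticalEnergy u ℓ) := by
    intro v
    calc (ℓ : ℝ) * shiftEnergy (fun p => u p 1) v
        = ∑ _j ∈ Icc 1 ℓ, shiftEnergy (fun p => u p 1) v := by
          rw [sum_const, Nat.card_Icc, Nat.add_sub_cancel, nsmul_eq_mul]
      _ ≤ ∑ j ∈ Icc 1 ℓ, (3 * v ^ 2 * shiftEnergy (fun p => u p j) 1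
            + 6 * ∑ p, (u p j - u p 1) ^ 2) :=
          sum_le_sum fun j _ => shiftEnergy_row_one_le u v j
      _ ≤ 3 * v ^ 2 * horizontalEnergy u ℓ + 6 * (ℓ ^ 2 * verticalEnergy u ℓ) := by
          rw [sum_add_distrib, ← mul_sum, ← mul_sum, horizontalEnergy]
          linarith [sum_sq_sub_row_one_le u ℓ]
  have hterm : ∀ v ∈ Ioc ℓ M, shiftEnergy (fun p => u p 1) v / (v : ℝ) ^ 2 ≤
      3 * horizontalEnergy u ℓ / ℓ + 6 * ℓ * verticalEnergy u ℓ * ((v : ℝ) ^ 2)⁻¹ := by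
    intro v hv
    have hv0 : (0 : ℝ) < v := Nat.cast_pos.2 (Nat.zero_lt_of_lt (mem_Ioc.1 hv).1)
    rw [div_le_iff₀ (by positivity)]
    field_simp
    nlinarith [havg v]
  have htail : ∑ v ∈ Ioc ℓ M, ((v : ℝ) ^ 2)⁻¹ ≤ 2 / (ℓ + 1) := by
    refine le_trans (sum_le_sum_of_subset_of_nonneg (t := Ioo ℓ (M + 1)) ?_
      fun _ _ _ => by positivity) (sum_Ioo_inv_sq_le ℓ (M + 1))
    intro v hv
    simp only [mem_Ioc, mem_Ioo] at hv ⊢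
    omega
  have hV := verticalEnergy_nonneg u ℓ
  calc ∑ v ∈ Ioc ℓ M, shiftEnergy (fun p => u p 1) v / (v : ℝ) ^ 2
      ≤ ∑ v ∈ Ioc ℓ M, (3 * horizontalEnergy u ℓ / ℓ
          + 6 * ℓ * verticalEnergy u ℓ * ((v : ℝ) ^ 2)⁻¹) := sum_le_sum hterm
    _ = (M - ℓ : ℕ) * (3 * horizontalEnergy u ℓ / ℓ)
          + 6 * ℓ * verticalEnergy u ℓ * ∑ v ∈ Ioc ℓ M, ((v : ℝ) ^ 2)⁻¹ := by
        rw [sum_add_distrib, sum_const, Nat.card_Ioc, nsmul_eq_mul, mul_sum]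
    _ ≤ (M - ℓ : ℕ) * (3 * horizontalEnergy u ℓ / ℓ)
          + 6 * ℓ * verticalEnergy u ℓ * (2 / (ℓ + 1)) := by
        gcongr
    _ ≤ 3 * (((M - ℓ : ℕ) : ℝ) / ℓ) * horizontalEnergy u ℓ + 12 * verticalEnergy u ℓ := by
        have : 6 * ℓ * verticalEnergy u ℓ * (2 / (ℓ + 1)) ≤ 12 * verticalEnergy u ℓ := by
          rw [mul_div_assoc', div_le_iff₀ (by positivity)]
          nlinarith
        linarith [show (M - ℓ : ℕ) * (3 * horizontalEnergy u ℓ / ℓ)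
          = 3 * (((M - ℓ : ℕ) : ℝ) / ℓ) * horizontalEnergy u ℓ by ring]

lemma sum_Icc_shiftEnergy_div_sq_le_of_le {c M : ℕ} (hℓ : 1 ≤ ℓ) (hℓM : ℓ ≤ M)
    (hM : M ≤ c * ℓ) :
    ∑ v ∈ Icc 1 M, shiftEnergy (fun p => u p 1) v / (v : ℝ) ^ 2 ≤
      3 * c * horizontalEnergy u ℓ + 36 * verticalEnergy u ℓ := by
  have hℓ0 : (0 : ℝ) < ℓ := by exact_mod_cast hℓ
  have hratio : 1 + ((M - ℓ : ℕ) : ℝ) / ℓ ≤ c := by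
    rw [Nat.cast_sub hℓM, ← sub_nonneg]
    have : (M : ℝ) ≤ c * ℓ := by exact_mod_cast hM
    field_simp
    linarith
  have hH := horizontalEnergy_nonneg u ℓ
  have hIoc : ∀ n, Icc 1 n = Ioc 0 n := fun n => by
    ext
    simp only [mem_Icc, mem_Ioc]
    omega
  rw [hIoc, ← sum_Ioc_consecutive _ (Nat.zero_le ℓ) hℓM, ← hIoc]
  nlinarith [sum_Icc_shiftEnergy_div_sq_le u ℓ, sum_Ioc_shiftEnergy_div_sq_le u ℓ hℓ M]

end Cylinder

theorem discrete_trace_bounded_general (k ℓ c : ℕ) [NeZero k]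
    (h2 : k < 2 * c * ℓ)
    (u : ZMod k → ℕ → ℝ) :
    bSemiSq k (fun i => u i 1) ≤ max (3 * (c : ℝ)) (4 * π ^ 2) * energySq k ℓ u := by
  have hℓ : 1 ≤ ℓ := Nat.pos_of_ne_zero fun h => by simp [h] at h2
  have hc : 1 ≤ c := Nat.pos_of_ne_zero fun h => by simp [h] at h2
  have hM : max ℓ (k / 2) ≤ c * ℓ :=
    max_le (Nat.le_mul_of_pos_left ℓ hc) (by rw [mul_assoc] at h2; omega)
  have hπ : (36 : ℝ) ≤ 4 * π ^ 2 := by nlinarith [pi_gt_three]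
  have hH := horizontalEnergy_nonneg u ℓ
  have hV := verticalEnergy_nonneg u ℓ
  calc bSemiSq k (fun i => u i 1)
      ≤ ∑ v ∈ Icc 1 (k / 2), shiftEnergy (fun p => u p 1) v / (v : ℝ) ^ 2 :=
        bSemiSq_le_sum_Icc _
    _ ≤ ∑ v ∈ Icc 1 (max ℓ (k / 2)), shiftEnergy (fun p => u p 1) v / (v : ℝ) ^ 2 :=
        sum_le_sum_of_subset_of_nonneg (Icc_subset_Icc_right (le_max_right _ _))
          fun v _ _ => div_nonneg (shiftEnergy_nonneg _ _) (sq_nonneg _)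
    _ ≤ 3 * c * horizontalEnergy u ℓ + 36 * verticalEnergy u ℓ :=
        sum_Icc_shiftEnergy_div_sq_le_of_le u ℓ hℓ (le_max_left _ _) hM
    _ ≤ max (3 * (c : ℝ)) (4 * π ^ 2) * energySq k ℓ u := by
        rw [energySq_eq_add, mul_add]
        gcongr
        · exact le_max_left _ _
        · exact hπ.trans (le_max_right _ _)

/-- Boundedness of the discrete trace operator: for every
`u : (ℤ/kℤ) × {1,…,ℓ} → ℝ`, the boundary restriction `φ(i) = u(i,1)` satisfies
`|φ|_Γ² ≤ max{3c, 4π²} · |u|_G²`. -/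
theorem discrete_trace_bounded (k ℓ c : ℕ) [NeZero k]
    (h1 : 4 * ℓ < k) (h2 : k < 2 * c * ℓ)
    (u : ZMod k → ℕ → ℝ) :
    bSemiSq k (fun i => u i 1) ≤ max (3 * (c : ℝ)) (4 * π ^ 2) * energySq k ℓ u :=
  discrete_trace_bounded_general k ℓ c h2 u
end
end

section
/- (Discrete trace theorem for graphs between G_{k,ℓ} and G*_{k,ℓ}.) Assume ℓ ≥ 2, and let H be any graph with G_{k,ℓ} ⊆ H ⊆ G*_{k,ℓ}, i.e., the H-energy is |u|_H² = |u|_G² plus the sum of (u(i,j+1) − u(i−1,j))² and/or (u(i,j+1) − u(i+1,j))² over any fixed subset of the diagonal edges of G*_{k,ℓ}. Then for every φ : ℤ/kℤ → ℝ: (i) every u with u(i,1) = φ(i) for all i satisfies |φ|_Γ² ≤ max{3c, 4π²} · |u|_H²; and (ii) there exists u with u(i,1) = φ(i) for all i and |u|_H² ≤ (4c + 475/9) · |φ|_Γ². -/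
/-!
Write `F(s) = ∑ₚ (φ(p + s) - φ p)²`. Grouping the pairs in `|φ|_Γ²` by their difference shows
that `|φ|_Γ²` lies between `∑_{0<n≤L} F(n)/n²` (any `2L < k`) and `∑_{0<n≤k/2} F(n)/n²`.

(i) Passing through row `j` of `u` gives `F(n) ≤ 3 n² Hⱼ + 6 ∑ᵢ (u(i,j) - u(i,1))²`, where
`Hⱼ` is the horizontal energy of row `j`. For `n ≤ ℓ` take `j = n`; the second term is then
controlled by the vertical energy through the discrete Hardy inequality. For `n > ℓ` average
over all rows `j ≤ ℓ`; summing `1/ℓ` over the `k/2 - ℓ < (c - 1)ℓ` long shifts is where `3c`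
comes from, while the vertical energy enters with constant `24 + 6 = 30 < 4π²`.

(ii) Extend `φ` by the running means `u(i,j) = (φ(i) + ⋯ + φ(i+j-1))/j`. Row `j` then has
horizontal energy exactly `F(j)/j²`, Cauchy–Schwarz bounds the vertical energy by the same sum,
and each diagonal edge costs at most one horizontal and one vertical edge.
-/

open Real Finset

noncomputable section

/-- The energy seminorm squared on a graph `H` with `G_{k,ℓ} ⊆ H ⊆ G*_{k,ℓ}`:
`|u|_H² = |u|_G²` plus the sum of `(u(i,j+1) − u(i−1,j))²` and/or
`(u(i,j+1) − u(i+1,j))²` over the subset of diagonal edges of `G*_{k,ℓ}`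
selected by the indicator functions `s1` and `s2`. -/
def energySqH (k ℓ : ℕ) [NeZero k] (s1 s2 : ZMod k → ℕ → Bool)
    (u : ZMod k → ℕ → ℝ) : ℝ :=
  energySq k ℓ u
    + ∑ i : ZMod k, ∑ j ∈ Finset.Icc 1 (ℓ - 1),
      ((if s1 i j then (u i (j + 1) - u (i - 1) j) ^ 2 else 0)
        + (if s2 i j then (u i (j + 1) - u (i + 1) j) ^ 2 else 0))

namespace DiscreteTrace

section ShiftEnergy

variable {G : Type*} [AddCommGroup G] [Fintype G]

def shiftEnergy (f : G → ℝ) (s : G) : ℝ := ∑ x, (f (x + s) - f x) ^ 2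

lemma sum_comp_add_right (f : G → ℝ) (s : G) : ∑ x, f (x + s) = ∑ x, f x :=
  Equiv.sum_comp (Equiv.addRight s) f

lemma shiftEnergy_nonneg (f : G → ℝ) (s : G) : 0 ≤ shiftEnergy f s :=
  sum_nonneg fun _ _ => sq_nonneg _

lemma shiftEnergy_neg (f : G → ℝ) (s : G) : shiftEnergy f (-s) = shiftEnergy f s := by
  rw [shiftEnergy, ← sum_comp_add_right _ s]
  simp only [add_neg_cancel_right, shiftEnergy]
  exact sum_congr rfl fun x _ => by ring

lemma shiftEnergy_nsmul_le (f : G → ℝ) (a : G) (n : ℕ) :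
    shiftEnergy f (n • a) ≤ n ^ 2 * shiftEnergy f a := by
  have telescope (x : G) :
      f (x + n • a) - f x = ∑ t ∈ range n, (f (x + t • a + a) - f (x + t • a)) := by
    have := sum_range_sub (fun t => f (x + t • a)) n
    simp only [succ_nsmul, ← add_assoc, zero_smul, add_zero] at this
    exact this.symm
  calc shiftEnergy f (n • a)
      ≤ ∑ x, n * ∑ t ∈ range n, (f (x + t • a + a) - f (x + t • a)) ^ 2 := by
        refine sum_le_sum fun x _ => ?_
        rw [telescope]
        exact sq_sum_le_card_mul_sum_sq.trans_eq (by rw [card_range])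
    _ = n * ∑ t ∈ range n, ∑ x, (f (x + t • a + a) - f (x + t • a)) ^ 2 := by
        rw [← mul_sum, sum_comm]
    _ = n ^ 2 * shiftEnergy f a := by
        simp only [sum_comp_add_right (fun x => (f (x + a) - f x) ^ 2), sum_const, card_range,
          nsmul_eq_mul, shiftEnergy]
        ring

lemma shiftEnergy_le_of_approx (f g : G → ℝ) (s : G) :
    shiftEnergy f s ≤ 3 * shiftEnergy g s + 6 * ∑ x, (g x - f x) ^ 2 := by
  have pointwise (x : G) : (f (x + s) - f x) ^ 2 ≤ 3 * (g (x + s) - g x) ^ 2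
      + 3 * (g (x + s) - f (x + s)) ^ 2 + 3 * (g x - f x) ^ 2 := by
    set A := g (x + s) - g x
    set B := g (x + s) - f (x + s)
    set C := g x - f x
    have : f (x + s) - f x = A - B + C := by ring
    rw [this]
    nlinarith [sq_nonneg (A + B), sq_nonneg (B + C), sq_nonneg (A - C)]
  calc shiftEnergy f s ≤ ∑ x, (3 * (g (x + s) - g x) ^ 2
        + 3 * (g (x + s) - f (x + s)) ^ 2 + 3 * (g x - f x) ^ 2) :=
        sum_le_sum fun x _ => pointwise x
    _ = _ := by
        simp only [sum_add_distrib, ← mul_sum, shiftEnergy,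
          sum_comp_add_right (fun x => (g x - f x) ^ 2)]
        ring

end ShiftEnergy

section Sequences

lemma sq_sub_le_mul_sum_sq (a : ℕ → ℝ) {m n : ℕ} (h : m ≤ n) :
    (a n - a m) ^ 2 ≤ ((n - m : ℕ) : ℝ) * ∑ j ∈ Ico m n, (a (j + 1) - a j) ^ 2 := by
  rw [← sum_Ico_sub a h, ← Nat.card_Ico]
  exact sq_sum_le_card_mul_sum_sq

private lemma hardy_step {m x y : ℝ} (hm : 0 < m) :
    (y / (m + 1)) ^ 2 + y ^ 2 / (m + 1) - x ^ 2 / m ≤ 2 * (y / (m + 1)) * (y - x) := by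
  have key : 2 * (y / (m + 1)) * (y - x) - ((y / (m + 1)) ^ 2 + y ^ 2 / (m + 1) - x ^ 2 / m)
      = (m * y - (m + 1) * x) ^ 2 / (m * (m + 1) ^ 2) := by
    field_simp
    ring
  have : 0 ≤ (m * y - (m + 1) * x) ^ 2 / (m * (m + 1) ^ 2) := by positivity
  linarith

theorem hardy_inequality (a : ℕ → ℝ) (M : ℕ) :
    ∑ m ∈ range M, ((a (m + 1) - a 0) / (m + 1)) ^ 2
      ≤ 4 * ∑ m ∈ range M, (a (m + 1) - a m) ^ 2 := by
  set x : ℕ → ℝ := fun m => (a (m + 1) - a 0) / (m + 1)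
  -- the term `(a M - a 0)^2 / M` is what makes the induction go through
  have key : ∀ M : ℕ, ∑ m ∈ range M, x m ^ 2 + (a M - a 0) ^ 2 / M
      ≤ 2 * ∑ m ∈ range M, x m * (a (m + 1) - a m) := by
    intro M
    induction M with
    | zero => simp
    | succ M ih =>
      simp only [sum_range_succ, Nat.cast_add, Nat.cast_one, x]
      rcases M.eq_zero_or_pos with rfl | hM
      · simp only [range_zero, sum_empty, CharP.cast_eq_zero, zero_add, div_one]
        nlinarith
      · have := hardy_step (x := a M - a 0) (y := a (M + 1) - a 0) (Nat.cast_pos.mpr hM)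
        simp only [x] at ih
        have e : a (M + 1) - a M = (a (M + 1) - a 0) - (a M - a 0) := by ring
        rw [e]
        linarith
  have hS : ∑ m ∈ range M, x m ^ 2 ≤ 2 * ∑ m ∈ range M, x m * (a (m + 1) - a m) := by
    have := key M
    have : 0 ≤ (a M - a 0) ^ 2 / M := by positivity
    linarith
  have hCS := sum_mul_sq_le_sq_mul_sq (range M) x (fun m => a (m + 1) - a m)
  have h0 : 0 ≤ ∑ m ∈ range M, x m ^ 2 := sum_nonneg fun _ _ => sq_nonneg _
  have h1 : 0 ≤ ∑ m ∈ range M, (a (m + 1) - a m) ^ 2 := sum_nonneg fun _ _ => sq_nonneg _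
  nlinarith

lemma sum_sq_sub_one_div_sq_le (a : ℕ → ℝ) (ℓ : ℕ) :
    ∑ n ∈ Icc 1 ℓ, (a n - a 1) ^ 2 / (n : ℝ) ^ 2
      ≤ 4 * ∑ j ∈ Icc 1 (ℓ - 1), (a (j + 1) - a j) ^ 2 := by
  rcases ℓ.eq_zero_or_pos with rfl | hℓ
  · simp
  obtain ⟨L, rfl⟩ := Nat.exists_eq_add_of_le' hℓ
  have hardy := hardy_inequality (fun m => a (m + 1)) L
  rw [Nat.add_sub_cancel, ← Ico_add_one_right_eq_Icc, ← Ico_add_one_right_eq_Icc,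
    sum_Ico_eq_sum_range, sum_Ico_eq_sum_range, Nat.add_sub_cancel, Nat.add_sub_cancel,
    sum_range_succ']
  rw [add_zero, sub_self, zero_pow two_ne_zero, zero_div, add_zero]
  refine le_trans (sum_le_sum fun m _ => ?_) (hardy.trans_eq (by simp only [add_comm 1]))
  rw [div_pow, add_comm 1 (m + 1)]
  push_cast
  exact div_le_div_of_nonneg_left (sq_nonneg _) (by positivity) (by gcongr; linarith)

lemma sum_Icc_one_div_mul_succ_sq_le {m : ℕ} (hm : 1 ≤ m) (L : ℕ) :
    ∑ j ∈ Icc m L, 1 / ((j : ℝ) * ((j : ℝ) + 1) ^ 2) ≤ 1 / (m : ℝ) ^ 2 := by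
  rcases le_or_gt m L with hmL | hLm
  · have telescope := sum_Icc_sub hmL (fun i : ℕ => -(1 / (i : ℝ) ^ 2))
    push_cast at telescope
    have term (j : ℕ) (hj : j ∈ Icc m L) :
        1 / ((j : ℝ) * ((j : ℝ) + 1) ^ 2) ≤ -(1 / ((j : ℝ) + 1) ^ 2) - -(1 / (j : ℝ) ^ 2) := by
      have : (1 : ℝ) ≤ j := by exact_mod_cast hm.trans (mem_Icc.mp hj).1
      rw [neg_sub_neg, div_sub_div _ _ (by positivity) (by positivity),
        div_le_div_iff₀ (by positivity) (by positivity)]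
      nlinarith
    have := sum_le_sum term
    rw [telescope] at this
    have : 0 ≤ 1 / ((L : ℝ) + 1) ^ 2 := by positivity
    linarith
  · rw [Icc_eq_empty_of_lt hLm, sum_empty]
    positivity

end Sequences

section Boundary

variable {k : ℕ} [NeZero k]

lemma cycDist_eq_natAbs_valMinAbs (p q : ZMod k) :
    cycDist k p q = (p - q).valMinAbs.natAbs := by
  rw [ZMod.valMinAbs_natAbs_eq_min, cycDist, ← neg_sub, ZMod.neg_val]
  have := (q - p).val_lt
  split_ifs with h
  · simp [h]
  · omega

lemma filter_natAbs_valMinAbs_eq {n : ℕ} (hn : 1 ≤ n) (hnk : n ≤ k / 2) :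
    {s ∈ univ.filter (· ≠ (0 : ZMod k)) | s.valMinAbs.natAbs = n}
      = {(n : ZMod k), -(n : ZMod k)} := by
  have hval : ((n : ZMod k)).valMinAbs.natAbs = n := by
    rw [ZMod.valMinAbs_natCast_of_le_half hnk, Int.natAbs_natCast]
  ext s
  simp only [mem_filter, mem_univ, true_and, mem_insert, mem_singleton]
  constructor
  · rintro ⟨-, hs⟩
    rwa [← hval, ZMod.natAbs_valMinAbs_eq_natAbs_valMinAbs] at hs
  · intro hs
    have habs : s.valMinAbs.natAbs = n := by
      rcases hs with rfl | rfl <;> simp [hval]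
    refine ⟨fun h0 => ?_, habs⟩
    rw [h0, ZMod.valMinAbs_zero, Int.natAbs_zero] at habs
    omega

-- The pair `{n, -n}` collapses to one point only when `2n = k`.
lemma bSemiSq_eq_sum_card_mul (φ : ZMod k → ℝ) :
    bSemiSq k φ = (1 / 2) * ∑ n ∈ Icc 1 (k / 2),
      (#{(n : ZMod k), -(n : ZMod k)} : ℝ) * (shiftEnergy φ n / (n : ℝ) ^ 2) := by
  have shift (p : ZMod k) : (∑ q : ZMod k,
      if p ≠ q then (φ p - φ q) ^ 2 / (cycDist k p q : ℝ) ^ 2 else 0)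
      = ∑ s : ZMod k, if s ≠ 0 then
          (φ (p + s) - φ p) ^ 2 / (s.valMinAbs.natAbs : ℝ) ^ 2 else 0 := by
    rw [← Equiv.sum_comp (Equiv.addLeft p)]
    refine sum_congr rfl fun s _ => ?_
    simp [cycDist_eq_natAbs_valMinAbs, sub_sq_comm]
  have maps (s : ZMod k) (hs : s ∈ univ.filter (· ≠ 0)) :
      s.valMinAbs.natAbs ∈ Icc 1 (k / 2) := by
    simp only [mem_filter, mem_univ, true_and] at hs
    have := ZMod.natAbs_valMinAbs_le s
    have : s.valMinAbs.natAbs ≠ 0 := by simpa using hs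
    simp only [mem_Icc]
    omega
  have fiber (n : ℕ) (hn : n ∈ Icc 1 (k / 2)) :
      ∑ s ∈ univ.filter (· ≠ (0 : ZMod k)) with s.valMinAbs.natAbs = n,
        shiftEnergy φ s / (s.valMinAbs.natAbs : ℝ) ^ 2
      = (#{(n : ZMod k), -(n : ZMod k)} : ℝ) * (shiftEnergy φ n / (n : ℝ) ^ 2) := by
    rw [mem_Icc] at hn
    have hval : ((n : ZMod k)).valMinAbs.natAbs = n := by
      rw [ZMod.valMinAbs_natCast_of_le_half hn.2, Int.natAbs_natCast]
    rw [filter_natAbs_valMinAbs_eq hn.1 hn.2, ← nsmul_eq_mul, ← sum_const]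
    refine sum_congr rfl fun s hs => ?_
    rcases mem_insert.mp hs with rfl | hs
    · rw [hval]
    · rw [mem_singleton.mp hs, shiftEnergy_neg, ZMod.natAbs_valMinAbs_neg, hval]
  have collect : ∑ s : ZMod k, ∑ p : ZMod k,
      (if s ≠ 0 then (φ (p + s) - φ p) ^ 2 / (s.valMinAbs.natAbs : ℝ) ^ 2 else 0)
      = ∑ s ∈ univ.filter (· ≠ 0), shiftEnergy φ s / (s.valMinAbs.natAbs : ℝ) ^ 2 := by
    rw [sum_filter]
    refine sum_congr rfl fun s _ => ?_
    split_ifs <;> simp [shiftEnergy, sum_div]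
  rw [bSemiSq, sum_congr rfl fun p _ => shift p, sum_comm, collect,
    ← sum_fiberwise_of_maps_to maps, sum_congr rfl fiber]

lemma bSemiSq_le_sum (φ : ZMod k → ℝ) :
    bSemiSq k φ ≤ ∑ n ∈ Icc 1 (k / 2), shiftEnergy φ n / (n : ℝ) ^ 2 := by
  rw [bSemiSq_eq_sum_card_mul, mul_sum]
  refine sum_le_sum fun n _ => ?_
  have hcard : (#{(n : ZMod k), -(n : ZMod k)} : ℝ) ≤ 2 := by exact_mod_cast card_le_two
  have := div_nonneg (shiftEnergy_nonneg φ n) (sq_nonneg (n : ℝ))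
  nlinarith

lemma sum_le_bSemiSq (φ : ZMod k → ℝ) {L : ℕ} (hL : 2 * L < k) :
    ∑ n ∈ Icc 1 L, shiftEnergy φ n / (n : ℝ) ^ 2 ≤ bSemiSq k φ := by
  have hcard (n : ℕ) (hn : n ∈ Icc 1 L) : #{(n : ZMod k), -(n : ZMod k)} = 2 := by
    rw [mem_Icc] at hn
    have hval : (n : ZMod k).val = n := ZMod.val_cast_of_lt (by omega)
    refine card_pair_eq_two_iff.mpr fun h => ?_
    rcases (ZMod.neg_eq_self_iff _).mp h.symm with h0 | h2
    · rw [← hval, h0, ZMod.val_zero] at hn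
      omega
    · omega
  rw [bSemiSq_eq_sum_card_mul, mul_sum]
  calc ∑ n ∈ Icc 1 L, shiftEnergy φ n / (n : ℝ) ^ 2
      = ∑ n ∈ Icc 1 L, 1 / 2 * ((#{(n : ZMod k), -(n : ZMod k)} : ℝ)
          * (shiftEnergy φ n / (n : ℝ) ^ 2)) :=
        sum_congr rfl fun n hn => by rw [hcard n hn]; ring
    _ ≤ _ := sum_le_sum_of_subset_of_nonneg (Icc_subset_Icc le_rfl (by omega))
        fun n _ _ => by have := shiftEnergy_nonneg φ n; positivity

lemma bSemiSq_nonneg (φ : ZMod k → ℝ) : 0 ≤ bSemiSq k φ := by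
  unfold bSemiSq
  positivity

end Boundary

section Energy

variable {k : ℕ} [NeZero k]

lemma energySq_le_energySqH (ℓ : ℕ) (s1 s2 : ZMod k → ℕ → Bool) (u : ZMod k → ℕ → ℝ) :
    energySq k ℓ u ≤ energySqH k ℓ s1 s2 u := by
  refine le_add_of_nonneg_right (sum_nonneg fun i _ => sum_nonneg fun j _ => ?_)
  exact add_nonneg (by split_ifs <;> positivity) (by split_ifs <;> positivity)

lemma energySqH_le_five_mul (ℓ : ℕ) (s1 s2 : ZMod k → ℕ → Bool) (u : ZMod k → ℕ → ℝ) :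
    energySqH k ℓ s1 s2 u ≤ 5 * energySq k ℓ u := by
  have diagonal (i : ZMod k) (j : ℕ) :
      ((if s1 i j then (u i (j + 1) - u (i - 1) j) ^ 2 else 0)
        + (if s2 i j then (u i (j + 1) - u (i + 1) j) ^ 2 else 0))
      ≤ 4 * (u i (j + 1) - u i j) ^ 2 + 2 * (u i j - u (i - 1) j) ^ 2
        + 2 * (u (i + 1) j - u i j) ^ 2 := by
    have h1 : (u i (j + 1) - u (i - 1) j) ^ 2
        ≤ 2 * (u i (j + 1) - u i j) ^ 2 + 2 * (u i j - u (i - 1) j) ^ 2 := by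
      nlinarith [sq_nonneg (u i (j + 1) - 2 * u i j + u (i - 1) j)]
    have h2 : (u i (j + 1) - u (i + 1) j) ^ 2
        ≤ 2 * (u i (j + 1) - u i j) ^ 2 + 2 * (u (i + 1) j - u i j) ^ 2 := by
      nlinarith [sq_nonneg (u i (j + 1) - 2 * u i j + u (i + 1) j)]
    split_ifs <;> linarith [sq_nonneg (u i (j + 1) - u (i - 1) j),
      sq_nonneg (u i (j + 1) - u (i + 1) j), sq_nonneg (u i (j + 1) - u i j),
      sq_nonneg (u i j - u (i - 1) j), sq_nonneg (u (i + 1) j - u i j)]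
  have backward : ∑ i : ZMod k, ∑ j ∈ Icc 1 (ℓ - 1), (u i j - u (i - 1) j) ^ 2
      = ∑ i : ZMod k, ∑ j ∈ Icc 1 (ℓ - 1), (u (i + 1) j - u i j) ^ 2 := by
    rw [← sum_comp_add_right _ 1]
    simp only [add_sub_cancel_right]
  have lower_rows : ∑ i : ZMod k, ∑ j ∈ Icc 1 (ℓ - 1), (u (i + 1) j - u i j) ^ 2
      ≤ ∑ i : ZMod k, ∑ j ∈ Icc 1 ℓ, (u (i + 1) j - u i j) ^ 2 :=
    sum_le_sum fun i _ => sum_le_sum_of_subset_of_nonneg (Icc_subset_Icc le_rfl (by omega))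
      fun _ _ _ => sq_nonneg _
  have split : ∑ i : ZMod k, ∑ j ∈ Icc 1 (ℓ - 1), (4 * (u i (j + 1) - u i j) ^ 2
      + 2 * (u i j - u (i - 1) j) ^ 2 + 2 * (u (i + 1) j - u i j) ^ 2)
      = 4 * ∑ i : ZMod k, ∑ j ∈ Icc 1 (ℓ - 1), (u i (j + 1) - u i j) ^ 2
        + 4 * ∑ i : ZMod k, ∑ j ∈ Icc 1 (ℓ - 1), (u (i + 1) j - u i j) ^ 2 := by
    simp only [sum_add_distrib, ← mul_sum, backward]
    ring
  have := sum_le_sum fun i (_ : i ∈ univ) => sum_le_sum fun j (_ : j ∈ Icc 1 (ℓ - 1)) =>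
    diagonal i j
  unfold energySqH energySq
  linarith

def horizontalEnergy (ℓ : ℕ) (u : ZMod k → ℕ → ℝ) : ℝ :=
  ∑ j ∈ Icc 1 ℓ, shiftEnergy (fun i => u i j) 1

def verticalEnergy (ℓ : ℕ) (u : ZMod k → ℕ → ℝ) : ℝ :=
  ∑ i, ∑ j ∈ Icc 1 (ℓ - 1), (u i (j + 1) - u i j) ^ 2

lemma energySq_eq (ℓ : ℕ) (u : ZMod k → ℕ → ℝ) :
    energySq k ℓ u = horizontalEnergy ℓ u + verticalEnergy ℓ u := by
  rw [energySq, sum_comm]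
  rfl

lemma verticalEnergy_nonneg (ℓ : ℕ) (u : ZMod k → ℕ → ℝ) : 0 ≤ verticalEnergy ℓ u :=
  sum_nonneg fun _ _ => sum_nonneg fun _ _ => sq_nonneg _

lemma horizontalEnergy_nonneg (ℓ : ℕ) (u : ZMod k → ℕ → ℝ) : 0 ≤ horizontalEnergy ℓ u :=
  sum_nonneg fun _ _ => shiftEnergy_nonneg _ _

end Energy

section LowerBound

variable {k : ℕ} [NeZero k]

lemma shiftEnergy_le_of_layer (u : ZMod k → ℕ → ℝ) (n h : ℕ) :
    shiftEnergy (fun i => u i 1) n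
      ≤ 3 * n ^ 2 * shiftEnergy (fun i => u i h) 1 + 6 * ∑ i, (u i h - u i 1) ^ 2 := by
  have := shiftEnergy_nsmul_le (fun i => u i h) 1 n
  rw [nsmul_one] at this
  linarith [shiftEnergy_le_of_approx (fun i => u i 1) (fun i => u i h) n]

lemma sum_sq_sub_layer_one_le (u : ZMod k → ℕ → ℝ) {ℓ h : ℕ} (hh : h ∈ Icc 1 ℓ) :
    ∑ i, (u i h - u i 1) ^ 2 ≤ ((ℓ : ℝ) - 1) * verticalEnergy ℓ u := by
  rw [mem_Icc] at hh
  rw [verticalEnergy, mul_sum]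
  refine sum_le_sum fun i _ => ?_
  calc (u i h - u i 1) ^ 2
      ≤ ((h - 1 : ℕ) : ℝ) * ∑ j ∈ Ico 1 h, (u i (j + 1) - u i j) ^ 2 :=
        sq_sub_le_mul_sum_sq (u i) hh.1
    _ ≤ ((ℓ : ℝ) - 1) * ∑ j ∈ Icc 1 (ℓ - 1), (u i (j + 1) - u i j) ^ 2 := by
        have hhℓ : (h : ℝ) ≤ ℓ := by exact_mod_cast hh.2
        have hh1 : (1 : ℝ) ≤ h := by exact_mod_cast hh.1
        refine mul_le_mul (by push_cast [hh.1]; linarith) (sum_le_sum_of_subset_of_nonneg ?_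
          fun _ _ _ => sq_nonneg _) (sum_nonneg fun _ _ => sq_nonneg _) (by linarith)
        intro j hj
        simp only [mem_Ico, mem_Icc] at hj ⊢
        omega

lemma sum_short_range_le (u : ZMod k → ℕ → ℝ) (ℓ : ℕ) :
    ∑ n ∈ Icc 1 ℓ, shiftEnergy (fun i => u i 1) n / (n : ℝ) ^ 2
      ≤ 3 * horizontalEnergy ℓ u + 24 * verticalEnergy ℓ u := by
  have hardy : ∑ n ∈ Icc 1 ℓ, (∑ i, (u i n - u i 1) ^ 2) / (n : ℝ) ^ 2
      ≤ 4 * verticalEnergy ℓ u := by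
    rw [verticalEnergy, mul_sum]
    simp only [sum_div]
    rw [sum_comm]
    exact sum_le_sum fun i _ => sum_sq_sub_one_div_sq_le (u i) ℓ
  have layer (n : ℕ) (hn : n ∈ Icc 1 ℓ) :
      shiftEnergy (fun i => u i 1) n / (n : ℝ) ^ 2
        ≤ 3 * shiftEnergy (fun i => u i n) 1 + 6 * ((∑ i, (u i n - u i 1) ^ 2) / (n : ℝ) ^ 2) := by
    have hn : (0 : ℝ) < n := by exact_mod_cast (mem_Icc.mp hn).1
    rw [div_le_iff₀ (by positivity)]
    calc _ ≤ _ := shiftEnergy_le_of_layer u n n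
      _ = _ := by field_simp
  calc _ ≤ ∑ n ∈ Icc 1 ℓ, (3 * shiftEnergy (fun i => u i n) 1
        + 6 * ((∑ i, (u i n - u i 1) ^ 2) / (n : ℝ) ^ 2)) := sum_le_sum layer
    _ ≤ _ := by
        rw [sum_add_distrib, ← mul_sum, ← mul_sum, horizontalEnergy]
        linarith

lemma mul_shiftEnergy_le (u : ZMod k → ℕ → ℝ) (ℓ n : ℕ) :
    ℓ * shiftEnergy (fun i => u i 1) n
      ≤ 3 * n ^ 2 * horizontalEnergy ℓ u + 6 * ℓ * ((ℓ - 1) * verticalEnergy ℓ u) := by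
  have layer (h : ℕ) (hh : h ∈ Icc 1 ℓ) : shiftEnergy (fun i => u i 1) n
      ≤ 3 * n ^ 2 * shiftEnergy (fun i => u i h) 1 + 6 * ((ℓ - 1) * verticalEnergy ℓ u) := by
    linarith [shiftEnergy_le_of_layer u n h, sum_sq_sub_layer_one_le u hh]
  have := sum_le_sum layer
  simp only [sum_const, Nat.card_Icc, add_tsub_cancel_right, nsmul_eq_mul, sum_add_distrib,
    ← mul_sum] at this
  rw [horizontalEnergy]
  linarith

lemma sum_long_range_le (u : ZMod k → ℕ → ℝ) {ℓ M : ℕ} (hℓ : 1 ≤ ℓ) (hM : ℓ ≤ M) :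
    ∑ n ∈ Ioc ℓ M, shiftEnergy (fun i => u i 1) n / (n : ℝ) ^ 2
      ≤ 3 * (((M : ℝ) - ℓ) / ℓ) * horizontalEnergy ℓ u + 6 * verticalEnergy ℓ u := by
  have hℓ' : (1 : ℝ) ≤ ℓ := by exact_mod_cast hℓ
  set SH := horizontalEnergy ℓ u with hSH
  set SV := verticalEnergy ℓ u with hSV'
  have hSV : 0 ≤ SV := verticalEnergy_nonneg ℓ u
  have term (n : ℕ) (hn : n ∈ Ioc ℓ M) : shiftEnergy (fun i => u i 1) n / (n : ℝ) ^ 2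
      ≤ 3 / ℓ * SH + 6 * (ℓ - 1) * SV * ((n : ℝ) ^ 2)⁻¹ := by
    have hn : (0 : ℝ) < n := Nat.cast_pos.mpr (by have := (mem_Ioc.mp hn).1; omega)
    have := mul_shiftEnergy_le u ℓ n
    rw [← hSH, ← hSV'] at this
    rw [div_le_iff₀ (by positivity)]
    rw [← mul_le_mul_iff_right₀ (by positivity : (0 : ℝ) < ℓ)]
    calc _ ≤ _ := this
      _ = _ := by field_simp
  have tail := sum_Ioc_inv_sq_le_sub (α := ℝ) (by omega : ℓ ≠ 0) hM
  have : 0 ≤ ((M : ℝ))⁻¹ := by positivity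
  calc _ ≤ ∑ n ∈ Ioc ℓ M, (3 / ℓ * SH + 6 * (ℓ - 1) * SV * ((n : ℝ) ^ 2)⁻¹) := sum_le_sum term
    _ = (M - ℓ : ℕ) * (3 / ℓ * SH) + 6 * (ℓ - 1) * SV * ∑ n ∈ Ioc ℓ M, ((n : ℝ) ^ 2)⁻¹ := by
        rw [sum_add_distrib, sum_const, Nat.card_Ioc, nsmul_eq_mul, mul_sum]
    _ ≤ (M - ℓ : ℕ) * (3 / ℓ * SH) + 6 * (ℓ - 1) * SV * (ℓ : ℝ)⁻¹ := by
        gcongr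
        linarith
    _ ≤ _ := by
        push_cast [hM]
        have : (ℓ - 1) * (ℓ : ℝ)⁻¹ ≤ 1 := by
          rw [← div_eq_mul_inv, div_le_one (by positivity)]
          linarith
        have : ((M : ℝ) - ℓ) * (3 / ℓ * SH) = 3 * (((M : ℝ) - ℓ) / ℓ) * SH := by ring
        nlinarith

lemma bSemiSq_le_energySq {ℓ c : ℕ} (hℓk : 2 * ℓ ≤ k) (hc : k < 2 * c * ℓ)
    (u : ZMod k → ℕ → ℝ) :
    bSemiSq k (fun i => u i 1) ≤ max (3 * (c : ℝ)) 30 * energySq k ℓ u := by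
  have hℓ : 1 ≤ ℓ := Nat.pos_of_ne_zero (by rintro rfl; simp at hc)
  have hcount : (((k / 2 : ℕ) : ℝ) - ℓ) / ℓ ≤ c - 1 := by
    have : k / 2 + 1 ≤ c * ℓ := by
      have := Nat.div_mul_le_self k 2
      rw [mul_assoc] at hc
      omega
    have : ((k / 2 : ℕ) : ℝ) + 1 ≤ c * ℓ := by exact_mod_cast this
    rw [div_le_iff₀ (by exact_mod_cast hℓ)]
    linarith
  have split : ∑ n ∈ Icc 1 (k / 2), shiftEnergy (fun i => u i 1) n / (n : ℝ) ^ 2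
      = ∑ n ∈ Icc 1 ℓ, shiftEnergy (fun i => u i 1) n / (n : ℝ) ^ 2
        + ∑ n ∈ Ioc ℓ (k / 2), shiftEnergy (fun i => u i 1) n / (n : ℝ) ^ 2 := by
    have hIcc (n : ℕ) : Icc 1 n = Ioc 0 n := Icc_add_one_left_eq_Ioc 0 n
    rw [hIcc, hIcc, sum_Ioc_consecutive _ (Nat.zero_le ℓ) (by omega : ℓ ≤ k / 2)]
  have hSH := horizontalEnergy_nonneg ℓ u
  have hSV := verticalEnergy_nonneg ℓ u
  have hmax₁ : 3 * (c : ℝ) ≤ max (3 * (c : ℝ)) 30 := le_max_left _ _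
  have hmax₂ : (30 : ℝ) ≤ max (3 * (c : ℝ)) 30 := le_max_right _ _
  calc bSemiSq k (fun i => u i 1)
      ≤ ∑ n ∈ Icc 1 (k / 2), shiftEnergy (fun i => u i 1) n / (n : ℝ) ^ 2 := bSemiSq_le_sum _
    _ ≤ (3 * horizontalEnergy ℓ u + 24 * verticalEnergy ℓ u)
        + (3 * ((((k / 2 : ℕ) : ℝ) - ℓ) / ℓ) * horizontalEnergy ℓ u
          + 6 * verticalEnergy ℓ u) :=
        split ▸ add_le_add (sum_short_range_le u ℓ) (sum_long_range_le u hℓ (by omega))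
    _ ≤ 3 * c * horizontalEnergy ℓ u + 30 * verticalEnergy ℓ u := by nlinarith
    _ ≤ max (3 * (c : ℝ)) 30 * energySq k ℓ u := by rw [energySq_eq]; nlinarith

end LowerBound

section Extension

variable {k : ℕ}

def extension (φ : ZMod k → ℝ) (i : ZMod k) (j : ℕ) : ℝ := (∑ t ∈ range j, φ (i + t)) / j

lemma extension_one (φ : ZMod k → ℝ) (i : ZMod k) : extension φ i 1 = φ i := by
  simp [extension]

lemma extension_add_one_sub (φ : ZMod k → ℝ) (i : ZMod k) (j : ℕ) :
    extension φ (i + 1) j - extension φ i j = (φ (i + j) - φ i) / j := by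
  have h₁ := sum_range_succ' (fun t : ℕ => φ (i + t)) j
  have h₂ := sum_range_succ (fun t : ℕ => φ (i + t)) j
  simp only [Nat.cast_add, Nat.cast_one, Nat.cast_zero, add_zero] at h₁
  simp only [extension, add_assoc, add_comm (1 : ZMod k), ← sub_div]
  congr 1
  linarith

lemma shiftEnergy_extension [NeZero k] (φ : ZMod k → ℝ) (j : ℕ) :
    shiftEnergy (fun i => extension φ i j) 1 = shiftEnergy φ j / (j : ℝ) ^ 2 := by
  simp only [shiftEnergy, extension_add_one_sub, div_pow, sum_div]

lemma extension_succ_sub {j : ℕ} (hj : j ≠ 0) (φ : ZMod k → ℝ) (i : ZMod k) :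
    extension φ i (j + 1) - extension φ i j
      = (∑ t ∈ range j, (φ (i + j) - φ (i + t))) / (j * (j + 1)) := by
  simp only [extension, sum_range_succ, sum_sub_distrib, sum_const, card_range, nsmul_eq_mul]
  push_cast
  field_simp
  ring

lemma sum_sq_extension_succ_sub_le [NeZero k] {j : ℕ} (hj : j ≠ 0) (φ : ZMod k → ℝ) :
    ∑ i, (extension φ i (j + 1) - extension φ i j) ^ 2
      ≤ (∑ m ∈ Icc 1 j, shiftEnergy φ m) / (j * (j + 1) ^ 2) := by
  have reflect : ∑ t ∈ range j, ∑ i : ZMod k, (φ (i + j) - φ (i + t)) ^ 2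
      = ∑ m ∈ Icc 1 j, shiftEnergy φ m := by
    refine sum_nbij' (fun t => j - t) (fun m => j - m) ?_ ?_ ?_ ?_ fun t ht => ?_
    iterate 4 (intro t ht; simp only [mem_range, mem_Icc] at ht ⊢; omega)
    rw [shiftEnergy, ← sum_comp_add_right (fun i => (φ (i + ((j - t : ℕ) : ZMod k)) - φ i) ^ 2)
      (t : ZMod k)]
    refine sum_congr rfl fun i _ => ?_
    rw [add_assoc, ← Nat.cast_add, Nat.add_sub_cancel' (mem_range.mp ht).le]
  calc ∑ i, (extension φ i (j + 1) - extension φ i j) ^ 2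
      ≤ ∑ i : ZMod k, (∑ t ∈ range j, (φ (i + j) - φ (i + t)) ^ 2) / (j * (j + 1) ^ 2) := by
        refine sum_le_sum fun i _ => ?_
        rw [extension_succ_sub hj, div_pow, div_le_div_iff₀ (by positivity) (by positivity)]
        have := sq_sum_le_card_mul_sum_sq (s := range j) (f := fun t => φ (i + j) - φ (i + t))
        rw [card_range] at this
        calc _ ≤ j * (∑ t ∈ range j, (φ (i + j) - φ (i + t)) ^ 2) * (j * (j + 1) ^ 2) := by
              gcongr
          _ = _ := by ring
    _ = _ := by rw [← sum_div, sum_comm, reflect]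

lemma sum_vertical_extension_le [NeZero k] (φ : ZMod k → ℝ) (L : ℕ) :
    ∑ j ∈ Icc 1 L, ∑ i, (extension φ i (j + 1) - extension φ i j) ^ 2
      ≤ ∑ m ∈ Icc 1 L, shiftEnergy φ m / (m : ℝ) ^ 2 := by
  calc ∑ j ∈ Icc 1 L, ∑ i, (extension φ i (j + 1) - extension φ i j) ^ 2
      ≤ ∑ j ∈ Icc 1 L, ∑ m ∈ Icc 1 j, shiftEnergy φ m / (j * (j + 1) ^ 2) := by
        refine sum_le_sum fun j hj => ?_
        rw [← sum_div]
        exact sum_sq_extension_succ_sub_le (Nat.one_le_iff_ne_zero.mp (mem_Icc.mp hj).1) φ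
    _ = ∑ m ∈ Icc 1 L, shiftEnergy φ m * ∑ j ∈ Icc m L, 1 / ((j : ℝ) * ((j : ℝ) + 1) ^ 2) := by
        rw [sum_comm' (t' := Icc 1 L) (s' := fun m => Icc m L) (fun j m => by
          simp only [mem_Icc]; omega)]
        simp only [mul_sum, mul_one_div]
    _ ≤ _ := sum_le_sum fun m hm => by
        rw [div_eq_mul_one_div]
        exact mul_le_mul_of_nonneg_left (sum_Icc_one_div_mul_succ_sq_le (mem_Icc.mp hm).1 L)
          (shiftEnergy_nonneg φ m)

lemma energySq_extension_le [NeZero k] {ℓ : ℕ} (hℓ : 2 * ℓ < k) (φ : ZMod k → ℝ) :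
    energySq k ℓ (extension φ) ≤ 2 * bSemiSq k φ := by
  have horizontal : ∑ i, ∑ j ∈ Icc 1 ℓ, (extension φ (i + 1) j - extension φ i j) ^ 2
      = ∑ j ∈ Icc 1 ℓ, shiftEnergy φ j / (j : ℝ) ^ 2 := by
    rw [sum_comm]
    exact sum_congr rfl fun j _ => shiftEnergy_extension φ j
  have vertical := sum_vertical_extension_le φ (ℓ - 1)
  rw [sum_comm] at vertical
  have h₁ := sum_le_bSemiSq φ hℓ
  have h₂ := sum_le_bSemiSq φ (L := ℓ - 1) (by omega)
  rw [energySq, horizontal]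
  linarith

end Extension

end DiscreteTrace

open DiscreteTrace in
theorem discrete_trace_theorem_between_general (k ℓ c : ℕ) [NeZero k]
    (h1 : 4 * ℓ < k) (h2 : k < 2 * c * ℓ)
    (s1 s2 : ZMod k → ℕ → Bool)
    (φ : ZMod k → ℝ) :
    (∀ u : ZMod k → ℕ → ℝ, (∀ i : ZMod k, u i 1 = φ i) →
      bSemiSq k φ ≤ max (3 * (c : ℝ)) (4 * π ^ 2) * energySqH k ℓ s1 s2 u) ∧
    (∃ u : ZMod k → ℕ → ℝ, (∀ i : ZMod k, u i 1 = φ i) ∧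
      energySqH k ℓ s1 s2 u ≤ (4 * (c : ℝ) + 475 / 9) * bSemiSq k φ) := by
  refine ⟨fun u hu => ?_, extension φ, extension_one φ, ?_⟩
  · obtain rfl : φ = fun i => u i 1 := funext fun i => (hu i).symm
    have hπ : (30 : ℝ) ≤ 4 * π ^ 2 := by nlinarith [pi_gt_three]
    have hE : 0 ≤ energySq k ℓ u := by
      rw [energySq_eq]
      exact add_nonneg (horizontalEnergy_nonneg ℓ u) (verticalEnergy_nonneg ℓ u)
    calc bSemiSq k (fun i => u i 1)
        ≤ max (3 * (c : ℝ)) 30 * energySq k ℓ u := bSemiSq_le_energySq (by omega) h2 u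
      _ ≤ max (3 * (c : ℝ)) (4 * π ^ 2) * energySqH k ℓ s1 s2 u :=
        mul_le_mul (max_le_max le_rfl hπ) (energySq_le_energySqH ℓ s1 s2 u) hE
          (le_max_of_le_right (by positivity))
  · have := bSemiSq_nonneg φ
    calc energySqH k ℓ s1 s2 (extension φ)
        ≤ 5 * energySq k ℓ (extension φ) := energySqH_le_five_mul ℓ s1 s2 _
      _ ≤ 5 * (2 * bSemiSq k φ) := by gcongr; exact energySq_extension_le (by omega) φ
      _ ≤ (4 * (c : ℝ) + 475 / 9) * bSemiSq k φ := by nlinarith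

/-- Discrete trace theorem for graphs between `G_{k,ℓ}` and `G*_{k,ℓ}`:
assume `ℓ ≥ 2`, and let `H` be any graph with `G_{k,ℓ} ⊆ H ⊆ G*_{k,ℓ}` (given by an
arbitrary fixed subset, encoded by `s1, s2`, of the diagonal edges of `G*_{k,ℓ}`).
Then for every `φ : ℤ/kℤ → ℝ`:
(i) every `u` with `u(i,1) = φ(i)` for all `i` satisfies `|φ|_Γ² ≤ max{3c, 4π²} · |u|_H²`;
(ii) there exists `u` with `u(i,1) = φ(i)` for all `i` and `|u|_H² ≤ (4c + 475/9)·|φ|_Γ²`. -/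
theorem discrete_trace_theorem_between (k ℓ c : ℕ) [NeZero k]
    (h1 : 4 * ℓ < k) (h2 : k < 2 * c * ℓ) (hℓ : 2 ≤ ℓ)
    (s1 s2 : ZMod k → ℕ → Bool)
    (φ : ZMod k → ℝ) :
    (∀ u : ZMod k → ℕ → ℝ, (∀ i : ZMod k, u i 1 = φ i) →
      bSemiSq k φ ≤ max (3 * (c : ℝ)) (4 * π ^ 2) * energySqH k ℓ s1 s2 u) ∧
    (∃ u : ZMod k → ℕ → ℝ, (∀ i : ZMod k, u i 1 = φ i) ∧
      energySqH k ℓ s1 s2 u ≤ (4 * (c : ℝ) + 475 / 9) * bSemiSq k φ) :=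
  discrete_trace_theorem_between_general k ℓ c h1 h2 s1 s2 φ
end
end

section
/- (Horizontal energy of the averaging extension.) Assume ℓ ≥ 2. For every φ : ℤ/kℤ → ℝ, the averaging extension u defined by u(i,j) = ((j−1)/(ℓ−1))·a + (1 − (j−1)/(ℓ−1))·a(i,j) satisfies Σ_{i∈ℤ/kℤ} Σ_{j=1}^{ℓ} (u(i+1,j) − u(i,j))² ≤ |φ|_Γ². -/
open Real Finset

noncomputable section

/-- The global average `a = (1/k) Σ_p φ(p)`. -/
def globalAvg (k : ℕ) [NeZero k] (φ : ZMod k → ℝ) : ℝ :=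
  (1 / (k : ℝ)) * ∑ p : ZMod k, φ p

/-- The local average `a(i,j) = (1/(2j−1)) Σ_{h=−(j−1)}^{j−1} φ(i+h)`. -/
def localAvg (k : ℕ) (φ : ZMod k → ℝ) (i : ZMod k) (j : ℕ) : ℝ :=
  (1 / (2 * (j : ℝ) - 1)) * ∑ h ∈ Finset.Icc (-(j : ℤ) + 1) ((j : ℤ) - 1), φ (i + (h : ZMod k))

/-- The averaging extension `u(i,j) = ((j−1)/(ℓ−1))·a + (1 − (j−1)/(ℓ−1))·a(i,j)`. -/
def avgExt (k ℓ : ℕ) [NeZero k] (φ : ZMod k → ℝ) (i : ZMod k) (j : ℕ) : ℝ :=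
  (((j : ℝ) - 1) / ((ℓ : ℝ) - 1)) * globalAvg k φ
    + (1 - ((j : ℝ) - 1) / ((ℓ : ℝ) - 1)) * localAvg k φ i j

lemma sum_Icc_int_left {a b : ℤ} (h : a ≤ b) (f : ℤ → ℝ) :
    ∑ x ∈ Finset.Icc a b, f x = f a + ∑ x ∈ Finset.Icc (a+1) b, f x := by
  rw [show Finset.Icc a b = insert a (Finset.Icc (a+1) b) by ext x; simp; omega,
      Finset.sum_insert (by simp)]

lemma sum_Icc_int_right {a b : ℤ} (h : a ≤ b) (f : ℤ → ℝ) :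
    ∑ x ∈ Finset.Icc a b, f x = f b + ∑ x ∈ Finset.Icc a (b-1), f x := by
  rw [show Finset.Icc a b = insert b (Finset.Icc a (b-1)) by ext x; simp; omega,
      Finset.sum_insert (by simp)]

lemma localAvg_shift (k : ℕ) (φ : ZMod k → ℝ) (i : ZMod k) (j : ℕ) (hj : 1 ≤ j) :
    localAvg k φ (i+1) j - localAvg k φ i j
      = (1/(2*(j:ℝ)-1)) * (φ (i + (j : ZMod k)) - φ (i + 1 - (j : ZMod k))) := by
  unfold localAvg
  have h1 : ∑ h ∈ Finset.Icc (-(j:ℤ)+1) ((j:ℤ)-1), φ (i + 1 + (h : ZMod k))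
      = ∑ h ∈ Finset.Icc (-(j:ℤ)+2) ((j:ℤ)), φ (i + (h : ZMod k)) := by
    rw [show Finset.Icc (-(j:ℤ)+2) ((j:ℤ))
        = Finset.map (addRightEmbedding 1) (Finset.Icc (-(j:ℤ)+1) ((j:ℤ)-1)) by
      rw [Finset.map_add_right_Icc]; congr 1 <;> ring, Finset.sum_map]
    refine Finset.sum_congr rfl fun h _ => ?_
    simp only [addRightEmbedding_apply]
    push_cast
    ring_nf
  have hjb : 1 ≤ (j:ℤ) := by exact_mod_cast hj
  rw [h1, sum_Icc_int_right (a := -(j:ℤ)+2) (by omega) (fun h => φ (i + (h:ZMod k))),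
      sum_Icc_int_left (a := -(j:ℤ)+1) (by omega) (fun h => φ (i + (h:ZMod k)))]
  have e1 : ((-(j:ℤ)+1 : ℤ) : ZMod k) = 1 - (j : ZMod k) := by push_cast; ring
  have e2 : (((j:ℤ) : ℤ) : ZMod k) = (j : ZMod k) := by push_cast; ring
  rw [e1, e2]
  have : i + (1 - (j:ZMod k)) = i + 1 - (j:ZMod k) := by ring
  rw [this]
  ring_nf
open Finset


lemma cyc_key (k ℓ : ℕ) [NeZero k] (h1 : 4 * ℓ < k) (j : ℕ) (hj1 : 1 ≤ j) (hj2 : j ≤ ℓ)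
    (i : ZMod k) :
    (i + (j : ZMod k)) ≠ (i + 1 - (j : ZMod k)) ∧
      cycDist k (i + (j : ZMod k)) (i + 1 - (j : ZMod k)) = 2 * j - 1 := by
  have hk : 2 * j - 1 < k := by omega
  set p := i + (j : ZMod k)
  set q := i + 1 - (j : ZMod k)
  have hd : p - q = ((2 * j - 1 : ℕ) : ZMod k) := by
    have : ((2 * j - 1 : ℕ) : ZMod k) = 2 * (j : ZMod k) - 1 := by
      push_cast [Nat.cast_sub (by omega : 1 ≤ 2 * j)]; ring
    rw [this]; simp only [p, q]; ring
  have hval : (p - q).val = 2 * j - 1 := by rw [hd, ZMod.val_cast_of_lt hk]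
  have hne : p ≠ q := by
    intro h
    have : (p - q).val = 0 := by rw [h]; simp
    omega
  refine ⟨hne, ?_⟩
  have hpq0 : p - q ≠ 0 := sub_ne_zero.mpr hne
  have hval2 : (q - p).val = k - (2 * j - 1) := by
    rw [show q - p = -(p - q) by ring, ZMod.neg_val, if_neg hpq0, hval]
  unfold cycDist
  rw [hval, hval2]
  omega


/-- Horizontal energy of the averaging extension: assuming `ℓ ≥ 2`,
for every `φ : ℤ/kℤ → ℝ` the averaging extension `u` satisfies
`Σ_{i∈ℤ/kℤ} Σ_{j=1}^{ℓ} (u(i+1,j) − u(i,j))² ≤ |φ|_Γ²`. -/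
theorem horizontal_energy_of_avgExt (k ℓ c : ℕ) [NeZero k]
    (h1 : 4 * ℓ < k) (h2 : k < 2 * c * ℓ) (hℓ : 2 ≤ ℓ)
    (φ : ZMod k → ℝ) :
    ∑ i : ZMod k, ∑ j ∈ Finset.Icc 1 ℓ,
      (avgExt k ℓ φ (i + 1) j - avgExt k ℓ φ i j) ^ 2 ≤ bSemiSq k φ := by
  classical
  set T : ZMod k → ZMod k → ℝ := fun p q =>
    if p ≠ q then (φ p - φ q) ^ 2 / (cycDist k p q : ℝ) ^ 2 else 0 with hT
  have Tnonneg : ∀ p q, 0 ≤ T p q := by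
    intro p q; simp only [hT]; split
    · exact div_nonneg (sq_nonneg _) (sq_nonneg _)
    · exact le_refl 0
  have Tsymm : ∀ p q, T p q = T q p := by
    intro p q; simp only [hT]
    have hc : cycDist k p q = cycDist k q p := by unfold cycDist; exact min_comm _ _
    by_cases h : p = q
    · simp [h]
    · rw [if_pos h, if_pos (Ne.symm h), hc]
      ring_nf
  -- Step 1 : pointwise bound
  have step1 : ∀ i : ZMod k, ∀ j ∈ Finset.Icc 1 ℓ,
      (avgExt k ℓ φ (i + 1) j - avgExt k ℓ φ i j) ^ 2
        ≤ T (i + (j : ZMod k)) (i + 1 - (j : ZMod k)) := by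
    intro i j hj
    rw [Finset.mem_Icc] at hj
    obtain ⟨hj1, hj2⟩ := hj
    obtain ⟨hne, hcd⟩ := cyc_key k ℓ h1 j hj1 hj2 i
    have hdiff : avgExt k ℓ φ (i+1) j - avgExt k ℓ φ i j
        = (1 - ((j:ℝ)-1)/((ℓ:ℝ)-1)) * (localAvg k φ (i+1) j - localAvg k φ i j) := by
      unfold avgExt; ring
    rw [hdiff, localAvg_shift k φ i j hj1]
    have hTval : T (i + (j : ZMod k)) (i + 1 - (j : ZMod k))
        = (φ (i + (j : ZMod k)) - φ (i + 1 - (j : ZMod k))) ^ 2 / (2*(j:ℝ)-1) ^ 2 := by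
      simp only [hT]
      rw [if_pos hne, hcd]
      congr 1
      push_cast [Nat.cast_sub (by omega : 1 ≤ 2 * j)]
      ring
    rw [hTval]
    set D := φ (i + (j : ZMod k)) - φ (i + 1 - (j : ZMod k))
    set t := ((j:ℝ)-1)/((ℓ:ℝ)-1) with ht
    have hM : (1:ℝ) ≤ 2*(j:ℝ)-1 := by
      have : (1:ℝ) ≤ (j:ℝ) := by exact_mod_cast hj1
      linarith
    have ht0 : 0 ≤ t := by
      apply div_nonneg
      · have : (1:ℝ) ≤ (j:ℝ) := by exact_mod_cast hj1
        linarith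
      · have : (2:ℝ) ≤ (ℓ:ℝ) := by exact_mod_cast hℓ
        linarith
    have hℓ' : (2:ℝ) ≤ (ℓ:ℝ) := by exact_mod_cast hℓ
    have ht1 : t ≤ 1 := by
      rw [ht, div_le_one (by linarith)]
      have : (j:ℝ) ≤ (ℓ:ℝ) := by exact_mod_cast hj2
      linarith
    have key : ((1-t) * ((1/(2*(j:ℝ)-1)) * D))^2 = (1-t)^2 * (D^2 / (2*(j:ℝ)-1)^2) := by
      field_simp
    rw [key]
    have h2' : 0 ≤ D^2 / (2*(j:ℝ)-1)^2 := div_nonneg (sq_nonneg _) (sq_nonneg _)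
    have hsq : (1-t)^2 ≤ 1 := by nlinarith
    exact mul_le_of_le_one_left h2' hsq
  have step1' : ∑ i : ZMod k, ∑ j ∈ Finset.Icc 1 ℓ,
      (avgExt k ℓ φ (i + 1) j - avgExt k ℓ φ i j) ^ 2
      ≤ ∑ i : ZMod k, ∑ j ∈ Finset.Icc 1 ℓ, T (i + (j : ZMod k)) (i + 1 - (j : ZMod k)) :=
    Finset.sum_le_sum fun i _ => Finset.sum_le_sum (step1 i)
  -- F
  set F : ZMod k → ℝ := fun d => ∑ q : ZMod k, T (q + d) q with hF
  have Fnonneg : ∀ d, 0 ≤ F d := fun d => Finset.sum_nonneg fun q _ => Tnonneg _ _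
  have Fneg : ∀ d, F (-d) = F d := by
    intro d
    rw [hF]
    refine Fintype.sum_equiv (Equiv.subRight d) _ _ fun r => ?_
    simp only [Equiv.subRight_apply]
    rw [show r + -d = r - d by ring, show r - d + d = r by ring, Tsymm]
  -- step 2 : reindex
  have castd : ∀ j : ℕ, 1 ≤ j → ((2*j-1 : ℕ) : ZMod k) = 2*(j:ZMod k) - 1 := by
    intro j hj
    push_cast [Nat.cast_sub (by omega : 1 ≤ 2*j)]
    ring
  have step2 : ∑ i : ZMod k, ∑ j ∈ Finset.Icc 1 ℓ, T (i + (j : ZMod k)) (i + 1 - (j : ZMod k))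
      = ∑ j ∈ Finset.Icc 1 ℓ, F ((2*j-1 : ℕ) : ZMod k) := by
    rw [Finset.sum_comm]
    refine Finset.sum_congr rfl fun j hj => ?_
    rw [Finset.mem_Icc] at hj
    rw [hF]
    refine Fintype.sum_equiv (Equiv.addRight (1 - (j : ZMod k))) _ _ fun i => ?_
    simp only [Equiv.coe_addRight]
    rw [castd j hj.1]
    congr 1 <;> ring
  -- bSemiSq = (1/2) Σ F
  have hbs : bSemiSq k φ = (1/2) * ∑ d : ZMod k, F d := by
    have h0 : ∀ q : ZMod k, ∑ p : ZMod k, T p q = ∑ d : ZMod k, T (q + d) q := by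
      intro q
      refine Fintype.sum_equiv (Equiv.subRight q) _ _ fun p => ?_
      simp only [Equiv.subRight_apply]
      rw [show q + (p - q) = p by ring]
    have hrfl : bSemiSq k φ = (1/2) * ∑ p : ZMod k, ∑ q : ZMod k, T p q := rfl
    rw [hrfl]
    congr 1
    rw [Finset.sum_comm,
        show (∑ d : ZMod k, F d) = ∑ q : ZMod k, ∑ d : ZMod k, T (q + d) q from
          Finset.sum_comm]
    exact Finset.sum_congr rfl fun q _ => h0 q
  -- S and image sums
  set g : ℕ → ZMod k := fun j => ((2*j-1 : ℕ) : ZMod k) with hg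
  have hvalg : ∀ j ∈ Finset.Icc 1 ℓ, (g j).val = 2*j-1 := by
    intro j hj
    rw [Finset.mem_Icc] at hj
    exact ZMod.val_cast_of_lt (by omega)
  have ginj : ∀ x ∈ Finset.Icc 1 ℓ, ∀ y ∈ Finset.Icc 1 ℓ, g x = g y → x = y := by
    intro x hx y hy hxy
    have hx' := hvalg x hx
    have hy' := hvalg y hy
    rw [hxy, hy'] at hx'
    rw [Finset.mem_Icc] at hx hy
    omega
  set S : Finset (ZMod k) := (Finset.Icc 1 ℓ).image g with hS
  have sumS : ∑ j ∈ Finset.Icc 1 ℓ, F (g j) = ∑ d ∈ S, F d := (Finset.sum_image ginj).symm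
  set S' : Finset (ZMod k) := S.image Neg.neg with hS'
  have sumS' : ∑ d ∈ S', F d = ∑ d ∈ S, F d := by
    rw [hS', Finset.sum_image (fun x _ y _ h => neg_injective h)]
    exact Finset.sum_congr rfl fun d _ => Fneg d
  have hdisj : Disjoint S S' := by
    rw [Finset.disjoint_left]
    intro d hdS hdS'
    rw [hS, Finset.mem_image] at hdS
    obtain ⟨j, hj, hjd⟩ := hdS
    rw [hS', Finset.mem_image] at hdS'
    obtain ⟨e, heS, hed⟩ := hdS'
    rw [hS, Finset.mem_image] at heS
    obtain ⟨j', hj', hj'e⟩ := heS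
    have h1' : d.val = 2*j-1 := by rw [← hjd]; exact hvalg j hj
    have he' : e.val = 2*j'-1 := by rw [← hj'e]; exact hvalg j' hj'
    have hene : e ≠ 0 := by
      intro h
      rw [h] at he'
      simp at he'
      rw [Finset.mem_Icc] at hj'
      omega
    have h2' : d.val = k - e.val := by rw [← hed, ZMod.neg_val, if_neg hene]
    rw [Finset.mem_Icc] at hj hj'
    omega
  have hsum2 : ∑ d ∈ S, F d + ∑ d ∈ S, F d ≤ ∑ d : ZMod k, F d := by
    calc ∑ d ∈ S, F d + ∑ d ∈ S, F d = ∑ d ∈ S, F d + ∑ d ∈ S', F d := by rw [sumS']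
    _ = ∑ d ∈ S ∪ S', F d := (Finset.sum_union hdisj).symm
    _ ≤ ∑ d : ZMod k, F d :=
        Finset.sum_le_sum_of_subset_of_nonneg (Finset.subset_univ _)
          (fun d _ _ => Fnonneg d)
  calc ∑ i : ZMod k, ∑ j ∈ Finset.Icc 1 ℓ,
      (avgExt k ℓ φ (i + 1) j - avgExt k ℓ φ i j) ^ 2
      ≤ ∑ i : ZMod k, ∑ j ∈ Finset.Icc 1 ℓ, T (i + (j : ZMod k)) (i + 1 - (j : ZMod k)) := step1'
    _ = ∑ d ∈ S, F d := by rw [step2, ← sumS]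
    _ ≤ bSemiSq k φ := by rw [hbs]; linarith
end
end

section
/- (Deviation of local averages from the global average.) Assume ℓ ≥ 2. For every φ : ℤ/kℤ → ℝ, Σ_{i∈ℤ/kℤ} Σ_{j=1}^{ℓ−1} ((a − a(i,j))/(ℓ−1))² ≤ c · |φ|_Γ². -/
open Real Finset

noncomputable section

/-!
Write `a` for the global average. For each `j`, `a - a(i,j)` is the mean of `a - φ` over a window
of `2j - 1` points, so Jensen's inequality and translation invariance give
`Σ_i (a - a(i,j))² ≤ Σ_p (a - φ p)²`. By the variance identity the right side is
`(1/2k) Σ_{p,q} (φ p - φ q)²`, and as no cycle distance exceeds `k/2` it is at most `(k/4) |φ|_Γ²`.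
Summing over the `ℓ - 1` values of `j` leaves `k / (4(ℓ - 1)) · |φ|_Γ²`, and `k < 2cℓ ≤ 4c(ℓ - 1)`.
-/
theorem two_mul_card_mul_sum_sq_sub_avg {ι : Type*} [Fintype ι] (f : ι → ℝ) :
    2 * Fintype.card ι * ∑ p, (f p - 1 / (Fintype.card ι : ℝ) * ∑ q, f q) ^ 2 =
      ∑ p, ∑ q, (f p - f q) ^ 2 := by
  rcases isEmpty_or_nonempty ι with _ | _
  · simp
  have hn : (Fintype.card ι : ℝ) ≠ 0 := by exact_mod_cast Fintype.card_ne_zero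
  simp only [sub_sq, sum_add_distrib, sum_sub_distrib, sum_const, card_univ, nsmul_eq_mul,
    ← mul_sum, ← sum_mul]
  field_simp
  ring

theorem two_mul_cycDist_le (k : ℕ) [NeZero k] (p q : ZMod k) : 2 * cycDist k p q ≤ k := by
  have h := ZMod.neg_val (p - q)
  rw [neg_sub] at h
  unfold cycDist
  split_ifs at h <;> omega

theorem cycDist_pos {k : ℕ} [NeZero k] {p q : ZMod k} (h : p ≠ q) : 0 < cycDist k p q :=
  lt_min (ZMod.val_pos.mpr (sub_ne_zero.mpr h)) (ZMod.val_pos.mpr (sub_ne_zero.mpr h.symm))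

theorem bSemiSq_nonneg (k : ℕ) [NeZero k] (φ : ZMod k → ℝ) : 0 ≤ bSemiSq k φ := by
  unfold bSemiSq
  refine mul_nonneg (by norm_num) (sum_nonneg fun p _ => sum_nonneg fun q _ => ?_)
  split_ifs <;> positivity

theorem sum_sum_sq_sub_le_bSemiSq (k : ℕ) [NeZero k] (φ : ZMod k → ℝ) :
    ∑ p, ∑ q, (φ p - φ q) ^ 2 ≤ (k : ℝ) ^ 2 / 2 * bSemiSq k φ := by
  have hterm : ∀ p q : ZMod k, (φ p - φ q) ^ 2 ≤
      (k : ℝ) ^ 2 / 4 * if p ≠ q then (φ p - φ q) ^ 2 / (cycDist k p q : ℝ) ^ 2 else 0 := by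
    intro p q
    split_ifs with h
    · have hd : (0 : ℝ) < cycDist k p q := by exact_mod_cast cycDist_pos h
      have hdk : 2 * (cycDist k p q : ℝ) ≤ k := by exact_mod_cast two_mul_cycDist_le k p q
      have hdsq : (cycDist k p q : ℝ) ^ 2 ≤ (k : ℝ) ^ 2 / 4 := by nlinarith
      rw [← mul_div_assoc, le_div_iff₀ (by positivity), mul_comm]
      exact mul_le_mul_of_nonneg_right hdsq (sq_nonneg _)
    · simp [not_not.mp h]
  calc ∑ p, ∑ q, (φ p - φ q) ^ 2
      ≤ ∑ p, ∑ q, (k : ℝ) ^ 2 / 4 *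
          if p ≠ q then (φ p - φ q) ^ 2 / (cycDist k p q : ℝ) ^ 2 else 0 := by
        gcongr with p _ q _; exact hterm p q
    _ = (k : ℝ) ^ 2 / 2 * bSemiSq k φ := by
        simp only [bSemiSq, ← mul_sum]; ring

theorem sum_sq_sub_globalAvg_le (k : ℕ) [NeZero k] (φ : ZMod k → ℝ) :
    ∑ p, (globalAvg k φ - φ p) ^ 2 ≤ k / 4 * bSemiSq k φ := by
  simp only [sub_sq_comm (globalAvg k φ)]
  have hk : (0 : ℝ) < k := by exact_mod_cast Nat.pos_of_neZero k
  have h := two_mul_card_mul_sum_sq_sub_avg φ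
  rw [ZMod.card] at h
  have hle := h.trans_le (sum_sum_sq_sub_le_bSemiSq k φ)
  rw [div_mul_eq_mul_div, le_div_iff₀ (by norm_num)]
  simp only [globalAvg]
  nlinarith

theorem sum_sq_window_avg_le {G ι : Type*} [AddGroup G] [Fintype G] (f : G → ℝ)
    (s : Finset ι) (g : ι → G) :
    ∑ i, ((∑ h ∈ s, f (i + g h)) / #s) ^ 2 ≤ ∑ p, f p ^ 2 := by
  rcases s.eq_empty_or_nonempty with rfl | hs
  · simpa using sum_nonneg fun p _ => sq_nonneg (f p)
  calc ∑ i, ((∑ h ∈ s, f (i + g h)) / #s) ^ 2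
      ≤ ∑ i, (∑ h ∈ s, f (i + g h) ^ 2) / #s := by
        gcongr; exact sum_div_card_sq_le_sum_sq_div_card
    _ = ∑ p, f p ^ 2 := by
        rw [← sum_div, sum_comm]
        have hshift (h : ι) : ∑ i, f (i + g h) ^ 2 = ∑ p, f p ^ 2 :=
          Equiv.sum_comp (Equiv.addRight (g h)) (fun p => f p ^ 2)
        rw [sum_congr rfl fun h _ => hshift h, sum_const, nsmul_eq_mul,
          mul_div_cancel_left₀ _ (by exact_mod_cast hs.card_ne_zero)]

theorem sub_localAvg_eq (k : ℕ) (φ : ZMod k → ℝ) (a : ℝ) (i : ZMod k) {j : ℕ} (hj : 1 ≤ j) :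
    a - localAvg k φ i j =
      (∑ h ∈ Icc (-(j : ℤ) + 1) (j - 1), (a - φ (i + h))) / #(Icc (-(j : ℤ) + 1) (j - 1)) := by
  have hcard : (#(Icc (-(j : ℤ) + 1) (j - 1)) : ℝ) = 2 * j - 1 := by
    rw [Int.card_Icc, show (j : ℤ) - 1 + 1 - (-j + 1) = ((2 * j - 1 : ℕ) : ℤ) by omega,
      Int.toNat_natCast, Nat.cast_sub (by omega)]
    push_cast; ring
  have hj' : (2 * j - 1 : ℝ) ≠ 0 := by
    have : (1 : ℝ) ≤ j := by exact_mod_cast hj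
    linarith
  rw [sum_sub_distrib, sum_const, nsmul_eq_mul, hcard, localAvg]
  field_simp

theorem sum_sq_sub_localAvg_le (k : ℕ) [NeZero k] (φ : ZMod k → ℝ) (a : ℝ) {j : ℕ}
    (hj : 1 ≤ j) : ∑ i, (a - localAvg k φ i j) ^ 2 ≤ ∑ p, (a - φ p) ^ 2 := by
  simp only [sub_localAvg_eq k φ a _ hj]
  exact sum_sq_window_avg_le (fun p => a - φ p) _ _

theorem local_average_deviation_general (k ℓ c : ℕ) [NeZero k]
    (h2 : k < 2 * c * ℓ)
    (φ : ZMod k → ℝ) :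
    ∑ i : ZMod k, ∑ j ∈ Finset.Icc 1 (ℓ - 1),
      ((globalAvg k φ - localAvg k φ i j) / ((ℓ : ℝ) - 1)) ^ 2
      ≤ (c : ℝ) * bSemiSq k φ := by
  have hB := bSemiSq_nonneg k φ
  rcases lt_or_ge ℓ 2 with hℓ | hℓ
  · rw [Icc_eq_empty (by omega)]
    simpa using mul_nonneg (Nat.cast_nonneg c) hB
  have hℓ' : (1 : ℝ) ≤ ℓ - 1 := by
    rw [le_sub_iff_add_le]; exact_mod_cast hℓ
  have hk : (k : ℝ) ≤ 4 * c * (ℓ - 1) := by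
    have : (k : ℝ) < 2 * c * ℓ := by exact_mod_cast h2
    nlinarith [Nat.cast_nonneg (α := ℝ) c]
  have hvar : ∀ j ∈ Icc 1 (ℓ - 1),
      ∑ i, ((globalAvg k φ - localAvg k φ i j) / ((ℓ : ℝ) - 1)) ^ 2 ≤
        k / 4 * bSemiSq k φ / ((ℓ : ℝ) - 1) ^ 2 := fun j hj => by
    simp only [div_pow, ← sum_div]
    gcongr
    exact (sum_sq_sub_localAvg_le k φ _ (mem_Icc.mp hj).1).trans (sum_sq_sub_globalAvg_le k φ)
  calc _ = ∑ j ∈ Icc 1 (ℓ - 1), ∑ i, ((globalAvg k φ - localAvg k φ i j) / ((ℓ : ℝ) - 1)) ^ 2 :=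
        sum_comm
    _ ≤ ∑ j ∈ Icc 1 (ℓ - 1), k / 4 * bSemiSq k φ / ((ℓ : ℝ) - 1) ^ 2 := sum_le_sum hvar
    _ = k / (4 * (ℓ - 1)) * bSemiSq k φ := by
        rw [sum_const, Nat.card_Icc, Nat.add_sub_cancel, nsmul_eq_mul, Nat.cast_sub (by omega)]
        field_simp
        ring
    _ ≤ c * bSemiSq k φ := by
        gcongr
        rw [div_le_iff₀ (by positivity)]
        linarith

/-- Deviation of local averages from the global average: assuming `ℓ ≥ 2`,
for every `φ : ℤ/kℤ → ℝ`,
`Σ_{i∈ℤ/kℤ} Σ_{j=1}^{ℓ−1} ((a − a(i,j))/(ℓ−1))² ≤ c · |φ|_Γ²`. -/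
theorem local_average_deviation (k ℓ c : ℕ) [NeZero k]
    (h1 : 4 * ℓ < k) (h2 : k < 2 * c * ℓ) (hℓ : 2 ≤ ℓ)
    (φ : ZMod k → ℝ) :
    ∑ i : ZMod k, ∑ j ∈ Finset.Icc 1 (ℓ - 1),
      ((globalAvg k φ - localAvg k φ i j) / ((ℓ : ℝ) - 1)) ^ 2
      ≤ (c : ℝ) * bSemiSq k φ :=
  local_average_deviation_general k ℓ c h2 φ
end
end
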